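/- arXiv:1211.2625 — 8 statements merged into one kernel-verified Lean document; each statement's English description precedes it below -/
import Mathlib

section
/- Let K be a field, let (f_{ij}) be an m×n matrix with entries in K whose rank is r, and let f_1,…,f_m ∈ K. Then the K-algebra K[T_1,…,T_n]/(f_{11}T_1+⋯+f_{1n}T_n+f_1, …, f_{m1}T_1+⋯+f_{mn}T_n+f_m) is either the zero ring or isomorphic as a K-algebra to the polynomial ring K[S_1,…,S_{n−r}] in n−r variables. -/
open MvPolynomial

lemma forcing_comb_mem {K : Type*} [Field K] {m n : ℕ} (M : Matrix (Fin m) (Fin n) K)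
    (v : Fin m → K) (a : Fin m → K) :
    (∑ j : Fin n, C (∑ i : Fin m, a i * M i j) * X j) + C (∑ i : Fin m, a i * v i) ∈
      Ideal.span (Set.range fun i : Fin m =>
        (∑ j : Fin n, C (M i j) * X j) + C (v i)) := by
  have h : (∑ j : Fin n, C (∑ i : Fin m, a i * M i j) * X j) + C (∑ i : Fin m, a i * v i)
      = ∑ i : Fin m, C (a i) * ((∑ j : Fin n, C (M i j) * X j) + C (v i)) := by
    simp only [mul_add, Finset.mul_sum, ← mul_assoc, ← C_mul, map_sum, Finset.sum_add_distrib,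
      Finset.sum_mul]
    rw [Finset.sum_comm]
  rw [h]
  exact Ideal.sum_mem _ fun i _ =>
    Ideal.mul_mem_left _ _ (Ideal.subset_span ⟨i, rfl⟩)

set_option maxHeartbeats 4000000 in
set_option synthInstance.maxHeartbeats 400000 in
/-- For a field `K`, an `m × n` matrix `M` over `K` of rank `r` and a vector
`v ∈ K^m`, the forcing algebra `K[T_1,…,T_n]/(M·T + v)` is either the zero ring or
isomorphic as a `K`-algebra to a polynomial ring in `n - r` variables. -/
theorem forcing_algebra_over_field_zero_or_affine_space
    (K : Type*) [Field K] (m n : ℕ) (M : Matrix (Fin m) (Fin n) K) (v : Fin m → K) :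
    Subsingleton
      (MvPolynomial (Fin n) K ⧸
        Ideal.span (Set.range fun i : Fin m =>
          (∑ j : Fin n, C (M i j) * X j) + C (v i))) ∨
    Nonempty
      ((MvPolynomial (Fin n) K ⧸
        Ideal.span (Set.range fun i : Fin m =>
          (∑ j : Fin n, C (M i j) * X j) + C (v i))) ≃ₐ[K]
        MvPolynomial (Fin (n - M.rank)) K) := by
  classical
  set I : Ideal (MvPolynomial (Fin n) K) := Ideal.span (Set.range fun i : Fin m =>
          (∑ j : Fin n, C (M i j) * X j) + C (v i)) with hI
  by_cases hcon : -v ∈ LinearMap.range M.mulVecLin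
  · right
    obtain ⟨t0, ht0⟩ := hcon
    have ht0' : ∀ i, v i = -∑ j, M i j * t0 j := by
      intro i
      have := congrFun ht0 i
      simp only [Matrix.mulVecLin_apply, Matrix.mulVec, dotProduct, Pi.neg_apply] at this
      rw [this, neg_neg]
    -- kernel basis
    have hker : Module.finrank K (LinearMap.ker M.mulVecLin) = n - M.rank := by
      have h1 := LinearMap.finrank_range_add_finrank_ker M.mulVecLin
      have h2 : Module.finrank K (Fin n → K) = n := by simp
      have h3 : M.rank = Module.finrank K (LinearMap.range M.mulVecLin) := rfl
      omega
    let b : Module.Basis (Fin (n - M.rank)) K (LinearMap.ker M.mulVecLin) :=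
      (Module.finBasis K _).reindex (finCongr hker)
    let B : Fin (n - M.rank) → Fin n → K := fun k => (b k : Fin n → K)
    have hBker : ∀ k i, ∑ j, M i j * B k j = 0 := by
      intro k i
      have : M.mulVecLin (B k) = 0 := (b k).2
      have := congrFun this i
      simpa [Matrix.mulVecLin_apply, Matrix.mulVec, dotProduct] using this
    -- generalized inverse
    obtain ⟨s, hs⟩ := M.mulVecLin.rangeRestrict.exists_rightInverse_of_surjective
      (LinearMap.range_rangeRestrict M.mulVecLin)
    obtain ⟨U, hU⟩ := Submodule.exists_isCompl (LinearMap.range M.mulVecLin)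
    set glin : (Fin m → K) →ₗ[K] (Fin n → K) :=
      s ∘ₗ (LinearMap.range M.mulVecLin).linearProjOfIsCompl U hU with hglin_def
    have hglin : ∀ x, M.mulVecLin (glin (M.mulVecLin x)) = M.mulVecLin x := by
      intro x
      have h1 : (LinearMap.range M.mulVecLin).linearProjOfIsCompl U hU (M.mulVecLin x)
          = ⟨M.mulVecLin x, LinearMap.mem_range_self _ x⟩ :=
        Submodule.linearProjOfIsCompl_apply_left hU ⟨M.mulVecLin x, LinearMap.mem_range_self _ x⟩
      have h2 : ∀ y : LinearMap.range M.mulVecLin, M.mulVecLin (s y) = y := by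
        intro y
        have h3 : M.mulVecLin.rangeRestrict (s y) = y := LinearMap.congr_fun hs y
        calc M.mulVecLin (s y) = (M.mulVecLin.rangeRestrict (s y) : Fin m → K) := rfl
          _ = y := by rw [h3]
      simp only [hglin_def, LinearMap.coe_comp, Function.comp_apply, h1]
      exact h2 _
    -- projection onto kernel
    set π : (Fin n → K) →ₗ[K] (Fin n → K) := LinearMap.id - glin ∘ₗ M.mulVecLin with hπ_def
    have hπker : ∀ x, M.mulVecLin (π x) = 0 := by
      intro x
      simp only [hπ_def, LinearMap.sub_apply, LinearMap.id_apply, LinearMap.coe_comp,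
        Function.comp_apply, map_sub, hglin, sub_self]
    have hπfix : ∀ x, M.mulVecLin x = 0 → π x = x := by
      intro x hx
      simp only [hπ_def, LinearMap.sub_apply, LinearMap.id_apply, LinearMap.coe_comp,
        Function.comp_apply, hx, map_zero, sub_zero]
    set κ : (Fin n → K) →ₗ[K] (LinearMap.ker M.mulVecLin) :=
      LinearMap.codRestrict _ π (fun x => LinearMap.mem_ker.mpr (hπker x)) with hκ_def
    have hκcoe : ∀ x, (κ x : Fin n → K) = π x := fun x => rfl
    -- delta vectors
    set e : Fin n → (Fin n → K) := fun j j' => if j = j' then 1 else 0 with he_def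
    set c : Fin (n - M.rank) → Fin n → K := fun k j => b.repr (κ (e j)) k with hc_def
    have hκBl : ∀ l, κ (B l) = b l := by
      intro l
      apply Subtype.ext
      rw [hκcoe]
      exact hπfix _ ((LinearMap.mem_ker).mp (b l).2)
    have HP1 : ∀ k l, (∑ j, c k j * B l j) = if k = l then 1 else 0 := by
      intro k l
      set L : (Fin n → K) →ₗ[K] K := (Finsupp.lapply k) ∘ₗ (b.repr.toLinearMap ∘ₗ κ) with hL_def
      have hL : ∀ x, L x = b.repr (κ x) k := fun _ => rfl
      calc ∑ j, c k j * B l j = ∑ j, B l j • L (e j) := by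
            simp only [hc_def, ← hL, smul_eq_mul, mul_comm]
        _ = L (B l) := by
            rw [LinearMap.pi_apply_eq_sum_univ L (B l)]
        _ = b.repr (κ (B l)) k := rfl
        _ = b.repr (b l) k := by rw [hκBl]
        _ = if k = l then 1 else 0 := by
            rw [b.repr_self]
            simp [Finsupp.single_apply, eq_comm]
    have HE : ∀ j j', (∑ k, B k j * c k j')
        = (if j = j' then 1 else 0) - ∑ i, glin (fun i' => if i = i' then 1 else 0) j * M i j' := by
      intro j j'
      have hcol : M.mulVecLin (e j') = fun i => M i j' := by
        ext i
        simp [Matrix.mulVecLin_apply, Matrix.mulVec, dotProduct, he_def, mul_ite,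
          Finset.sum_ite_eq]
      calc ∑ k, B k j * c k j'
          = ∑ k, (b.repr (κ (e j')) k • (b k : Fin n → K)) j := by
            simp only [hc_def, Pi.smul_apply, smul_eq_mul, B, mul_comm]
        _ = (↑(∑ k, b.repr (κ (e j')) k • b k) : Fin n → K) j := by
            rw [Submodule.coe_sum]
            simp [Finset.sum_apply]
        _ = (↑(κ (e j')) : Fin n → K) j := by rw [Module.Basis.sum_repr]
        _ = π (e j') j := by rw [hκcoe]
        _ = e j' j - glin (M.mulVecLin (e j')) j := by
            simp [hπ_def, Pi.sub_apply]
        _ = (if j = j' then 1 else 0) - ∑ i, glin (fun i' => if i = i' then 1 else 0) j * M i j' := by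
            congr 1
            · simp [he_def, eq_comm]
            · rw [hcol, LinearMap.pi_apply_eq_sum_univ glin (fun i => M i j')]
              simp [Finset.sum_apply, mul_comm]
    -- the forward algebra hom
    -- the forward algebra hom
    set ψ : MvPolynomial (Fin n) K →ₐ[K] MvPolynomial (Fin (n - M.rank)) K :=
      aeval (fun j => C (t0 j) + ∑ k, C (B k j) * X k) with hψ_def
    have hψg : ∀ i₀ : Fin m, ψ ((∑ j : Fin n, C (M i₀ j) * X j) + C (v i₀)) = 0 := by
      intro i₀
      rw [hψ_def]
      simp only [map_add, map_sum, map_mul, aeval_C, aeval_X, algebraMap_eq]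
      have hterm : ∀ j, C (M i₀ j) * (C (t0 j) + ∑ k, C (B k j) * X k)
          = C (M i₀ j * t0 j) + ∑ k, C (M i₀ j * B k j) * X k := by
        intro j
        simp only [mul_add, Finset.mul_sum, ← mul_assoc, ← C_mul]
      simp only [hterm]
      rw [Finset.sum_add_distrib, Finset.sum_comm]
      simp only [← Finset.sum_mul, ← map_sum, hBker, ht0' i₀]
      simp
    have hIker : ∀ a ∈ I, ψ a = 0 := by
      intro a ha
      have : I ≤ RingHom.ker ψ := by
        rw [hI, Ideal.span_le]
        rintro _ ⟨i₀, rfl⟩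
        exact hψg i₀
      exact this ha
    set ψbar := Ideal.Quotient.liftₐ I ψ hIker with hψbar_def
    -- the backward algebra hom
    set hpoly : Fin (n - M.rank) → MvPolynomial (Fin n) K :=
      fun k => (∑ j, C (c k j) * X j) + C (-(∑ j, c k j * t0 j)) with hhpoly_def
    set α : MvPolynomial (Fin (n - M.rank)) K →ₐ[K] (MvPolynomial (Fin n) K ⧸ I) :=
      aeval (fun k => Ideal.Quotient.mk I (hpoly k)) with hα_def
    have h1 : ψbar.comp α = AlgHom.id K (MvPolynomial (Fin (n - M.rank)) K) := by
      apply MvPolynomial.algHom_ext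
      intro k
      rw [AlgHom.comp_apply, AlgHom.id_apply, hα_def, aeval_X, hψbar_def,
        Ideal.Quotient.liftₐ_apply]
      erw [Ideal.Quotient.lift_mk]
      rw [hψ_def, hhpoly_def]
      simp only [AlgHom.toRingHom_eq_coe, RingHom.coe_coe, map_add, map_sum, map_mul, aeval_C,
        aeval_X, algebraMap_eq]
      have hterm : ∀ j, C (c k j) * (C (t0 j) + ∑ l, C (B l j) * X l)
          = C (c k j * t0 j) + ∑ l, C (c k j * B l j) * X l := by
        intro j
        simp only [mul_add, Finset.mul_sum, ← mul_assoc, ← C_mul]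
      simp only [hterm]
      rw [Finset.sum_add_distrib, Finset.sum_comm]
      simp only [← Finset.sum_mul, ← map_sum, HP1]
      simp only [apply_ite C, C_1, C_0, ite_mul, one_mul, zero_mul, Finset.sum_ite_eq,
        Finset.mem_univ, if_true, C_neg]
      ring
    have h2 : α.comp ψbar = AlgHom.id K (MvPolynomial (Fin n) K ⧸ I) := by
      apply Ideal.Quotient.algHom_ext
      apply MvPolynomial.algHom_ext
      intro j
      rw [AlgHom.comp_apply, AlgHom.comp_apply, AlgHom.comp_apply, AlgHom.id_apply,
        Ideal.Quotient.mkₐ_eq_mk, hψbar_def, Ideal.Quotient.liftₐ_apply]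
      erw [Ideal.Quotient.lift_mk]
      rw [hψ_def]
      simp only [AlgHom.toRingHom_eq_coe, RingHom.coe_coe, aeval_X]
      rw [hα_def]
      simp only [map_add, map_sum, map_mul, aeval_C, aeval_X]
      set a : Fin m → K := fun i => glin (fun i' => if i = i' then 1 else 0) j with ha_def
      have hA : ∀ j', (∑ i, a i * M i j') = (if j = j' then 1 else 0) - ∑ k, B k j * c k j' := by
        intro j'
        rw [HE j j']
        simp only [ha_def]
        ring
      have hC : (∑ i, a i * v i) = (∑ k, B k j * (∑ j', c k j' * t0 j')) - t0 j := by
        have e1 : ∑ i, a i * v i = -∑ j', (∑ i, a i * M i j') * t0 j' := by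
          calc ∑ i, a i * v i = ∑ i, ∑ j', -(a i * (M i j' * t0 j')) := by
                refine Finset.sum_congr rfl fun i _ => ?_
                rw [ht0' i, mul_neg, Finset.mul_sum, ← Finset.sum_neg_distrib]
            _ = ∑ j', ∑ i, -(a i * (M i j' * t0 j')) := Finset.sum_comm
            _ = -∑ j', (∑ i, a i * M i j') * t0 j' := by
                simp [Finset.sum_neg_distrib, Finset.sum_mul, mul_assoc]
        rw [e1]
        simp only [hA, sub_mul, Finset.sum_sub_distrib, ite_mul, one_mul, zero_mul,
          Finset.sum_ite_eq, Finset.mem_univ, if_true]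
        rw [neg_sub]
        congr 1
        simp only [Finset.sum_mul]
        rw [Finset.sum_comm]
        refine Finset.sum_congr rfl fun k _ => ?_
        rw [Finset.mul_sum]
        refine Finset.sum_congr rfl fun j' _ => ?_
        ring
      have hmem := forcing_comb_mem M v a
      rw [← hI] at hmem
      have key : C (t0 j) + (∑ k, C (B k j) * hpoly k) - X j
          = -((∑ j', C (∑ i, a i * M i j') * X j') + C (∑ i, a i * v i)) := by
        have hterm2 : ∀ k, C (B k j) * hpoly k
            = (∑ j', C (B k j * c k j') * X j') + C (-(B k j * ∑ j', c k j' * t0 j')) := by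
          intro k
          rw [hhpoly_def]
          simp only [mul_add, Finset.mul_sum, ← mul_assoc, ← C_mul, mul_neg]
        simp only [hterm2]
        rw [Finset.sum_add_distrib, Finset.sum_comm]
        simp only [← Finset.sum_mul, ← map_sum]
        simp only [hA, hC]
        simp only [C_sub, sub_mul, Finset.sum_sub_distrib, apply_ite C, C_1, C_0, ite_mul,
          one_mul, zero_mul, Finset.sum_ite_eq, Finset.mem_univ, if_true, C_neg,
          Finset.sum_neg_distrib]
        ring
      have hmk : Ideal.Quotient.mk I (C (t0 j) + ∑ k, C (B k j) * hpoly k)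
          = Ideal.Quotient.mk I (X j) := by
        rw [Ideal.Quotient.mk_eq_mk_iff_sub_mem, key]
        exact I.neg_mem hmem
      rw [← hmk]
      simp only [map_add, map_sum, map_mul, ← MvPolynomial.algebraMap_eq,
        Ideal.Quotient.mk_algebraMap]
    exact ⟨AlgEquiv.ofAlgHom ψbar α h1 h2⟩
  · left
    rw [Ideal.Quotient.subsingleton_iff]
    obtain ⟨φ, hφ1, hφ0⟩ : ∃ φ : Module.Dual K (Fin m → K), φ (-v) = 1 ∧
        ∀ x, φ (M.mulVecLin x) = 0 := by
      set W := LinearMap.range M.mulVecLin with hW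
      have hq : W.mkQ (-v) ≠ 0 := by
        simpa [Submodule.mkQ_apply, Submodule.Quotient.mk_eq_zero] using hcon
      obtain ⟨ξ, hξ⟩ : ∃ ξ : Module.Dual K ((Fin m → K) ⧸ W), ξ (W.mkQ (-v)) ≠ 0 := by
        by_contra hcontra
        push_neg at hcontra
        exact hq ((Module.forall_dual_apply_eq_zero_iff K _).mp hcontra)
      refine ⟨(ξ (W.mkQ (-v)))⁻¹ • (ξ ∘ₗ W.mkQ), ?_, ?_⟩
      · simp only [LinearMap.smul_apply, LinearMap.coe_comp, Function.comp_apply, smul_eq_mul]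
        exact inv_mul_cancel₀ hξ
      · intro x
        have : W.mkQ (M.mulVecLin x) = 0 := by
          rw [Submodule.mkQ_apply, Submodule.Quotient.mk_eq_zero]
          exact LinearMap.mem_range_self _ x
        simp only [LinearMap.smul_apply, LinearMap.coe_comp, Function.comp_apply, this,
          smul_eq_mul, map_zero, mul_zero]
    rw [Ideal.eq_top_iff_one]
    set a : Fin m → K := fun i => φ (fun i' => if i = i' then 1 else 0) with ha_def
    have hMa : ∀ j, ∑ i, a i * M i j = 0 := by
      intro j
      have hcol : (fun i => M i j) = M.mulVecLin (Pi.single j 1) := by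
        ext i
        simp [Matrix.mulVecLin_apply, Matrix.mulVec_single]
      have h0 : φ (fun i => M i j) = 0 := by rw [hcol]; exact hφ0 _
      rw [LinearMap.pi_apply_eq_sum_univ φ (fun i => M i j)] at h0
      rw [← h0]
      exact Finset.sum_congr rfl fun i _ => by rw [ha_def, smul_eq_mul, mul_comm]
    have hva : ∑ i, a i * v i = -1 := by
      have hv : φ v = -1 := by
        have : φ (-v) = -φ v := map_neg φ v
        rw [this] at hφ1
        exact neg_eq_iff_eq_neg.mp hφ1
      rw [LinearMap.pi_apply_eq_sum_univ φ v] at hv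
      rw [← hv]
      exact Finset.sum_congr rfl fun i _ => by rw [ha_def, smul_eq_mul, mul_comm]
    have := forcing_comb_mem M v a
    rw [← hI] at this
    simp only [hMa, hva, map_zero, zero_mul, Finset.sum_const_zero, zero_add] at this
    have h1 : (1 : MvPolynomial (Fin n) K) = -(C (-1 : K)) := by simp
    rw [h1]
    exact I.neg_mem this
end

section
/- Let R be a commutative ring, f_1,…,f_n, f ∈ R, let A = R[T_1,…,T_n]/(f_1T_1+⋯+f_nT_n+f) be the forcing algebra and φ : Spec A → Spec R the forcing morphism. Then every connected component C of Spec A satisfies C = φ^{-1}(φ(C)); that is, every connected component of Spec A is the full preimage under φ of a subset of Spec R. -/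
open MvPolynomial

section aux

variable {D K : Type*} [CommRing D] [Field K] [Algebra D K] [IsFractionRing D K]

lemma my_clear_denominators {σ : Type*} (u : MvPolynomial σ K) :
    ∃ (s : nonZeroDivisors D) (w : MvPolynomial σ D),
      C (algebraMap D K s) * u = MvPolynomial.map (algebraMap D K) w := by
  induction u using MvPolynomial.induction_on with
  | C a =>
      obtain ⟨⟨b, s⟩, h⟩ := IsLocalization.surj (nonZeroDivisors D) a
      exact ⟨s, C b, by rw [← C_mul, mul_comm ((algebraMap D K) (s : D)) a, h, MvPolynomial.map_C]⟩
  | add p q hp hq =>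
      obtain ⟨s1, w1, h1⟩ := hp
      obtain ⟨s2, w2, h2⟩ := hq
      refine ⟨s1 * s2, C (s2 : D) * w1 + C (s1 : D) * w2, ?_⟩
      simp only [Submonoid.coe_mul, map_mul, map_add, MvPolynomial.map_C, C_mul]
      rw [← h1, ← h2]; ring
  | mul_X p i hp =>
      obtain ⟨s1, w1, h1⟩ := hp
      exact ⟨s1, w1 * X i, by rw [map_mul, MvPolynomial.map_X, ← mul_assoc, h1]⟩

end aux

lemma my_linear_prime {K : Type*} [Field K] {n : ℕ} (c : Fin n → K) (c₀ : K) (i₀ : Fin n)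
    (hc : c i₀ ≠ 0) :
    Prime ((∑ i : Fin n, C (c i) * X i) + C c₀) := by
  classical
  let σ := {b : Fin n // b ≠ i₀}
  let ε : Fin n ≃ Option σ := (Equiv.optionSubtypeNe i₀).symm
  let E := (renameEquiv K ε).trans (optionEquivLeft K σ)
  set m : MvPolynomial σ K := (∑ i ∈ (Finset.univ.erase i₀).attach,
      C (c i.1) * X (⟨i.1, (Finset.mem_erase.mp i.2).1⟩ : σ)) + C c₀ with hm
  have hsplit : (∑ i : Fin n, C (c i) * X i) + C c₀
      = C (c i₀) * X i₀ + ((∑ i ∈ Finset.univ.erase i₀, C (c i) * X i) + C c₀) := by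
    rw [← Finset.add_sum_erase _ _ (Finset.mem_univ i₀)]
    ring
  have h1 : E (C (c i₀) * X i₀) = Polynomial.C (C (c i₀)) * Polynomial.X := by
    show (optionEquivLeft K σ) (rename ε (C (c i₀) * X i₀)) = _
    rw [map_mul, rename_C, rename_X, show ε i₀ = none from Equiv.optionSubtypeNe_symm_self i₀,
      map_mul, optionEquivLeft_C, optionEquivLeft_X_none]
  have h2 : E ((∑ i ∈ Finset.univ.erase i₀, C (c i) * X i) + C c₀) = Polynomial.C m := by
    rw [hm, map_add, map_add, map_sum, map_sum, ← Finset.sum_attach (Finset.univ.erase i₀)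
      (fun i => E (C (c i) * X i))]
    refine congrArg₂ (· + ·) ?_ ?_
    · refine Finset.sum_congr rfl fun i _ => ?_
      have hi : (i : Fin n) ≠ i₀ := (Finset.mem_erase.mp i.2).1
      show (optionEquivLeft K σ) (rename ε (C (c i.1) * X i.1)) = _
      rw [map_mul, rename_C, rename_X, show ε i.1 = some ⟨i.1, hi⟩ from
        Equiv.optionSubtypeNe_symm_of_ne hi, map_mul, optionEquivLeft_C,
        optionEquivLeft_X_some, Polynomial.C_mul]
    · show (optionEquivLeft K σ) (rename ε (C c₀)) = _
      rw [rename_C, optionEquivLeft_C]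
  have hEg : E ((∑ i : Fin n, C (c i) * X i) + C c₀)
      = Polynomial.C (C (c i₀)) * Polynomial.X + Polynomial.C m := by
    rw [hsplit, map_add, h1, h2]
  have hfact : Polynomial.C (C (c i₀)) * Polynomial.X + Polynomial.C m
      = Polynomial.C (C (c i₀)) *
        (Polynomial.X - Polynomial.C (-(C (c i₀)⁻¹ * m))) := by
    rw [mul_sub, ← Polynomial.C_mul,
      show C (c i₀) * -(C (c i₀)⁻¹ * m) = -m by
        rw [mul_neg, ← mul_assoc, ← C_mul, mul_inv_cancel₀ hc, C_1, one_mul],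
      map_neg, sub_neg_eq_add]
  have hu : IsUnit (Polynomial.C (C (c i₀)) : Polynomial (MvPolynomial σ K)) :=
    ((isUnit_iff_ne_zero.mpr hc).map MvPolynomial.C).map Polynomial.C
  rw [← MulEquiv.prime_iff E.toMulEquiv]
  show Prime (E _)
  rw [hEg, hfact]
  exact (associated_unit_mul_left _ _ hu).symm.prime (Polynomial.prime_X_sub_C _)

section core

variable {R : Type*} [CommRing R] {n : ℕ} (f : Fin n → R) (f₀ : R)

lemma my_fiber_lemma (p : Ideal R) [hp : p.IsPrime]
    (P : Ideal (MvPolynomial (Fin n) R)) [hP : P.IsPrime]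
    (hgP : (∑ i : Fin n, C (f i) * X i) + C f₀ ∈ P)
    (hCP : Ideal.comap (C : R →+* MvPolynomial (Fin n) R) P = p) :
    Ideal.comap
      (MvPolynomial.map ((algebraMap (R ⧸ p) (FractionRing (R ⧸ p))).comp (Ideal.Quotient.mk p)))
      (Ideal.span {MvPolynomial.map
        ((algebraMap (R ⧸ p) (FractionRing (R ⧸ p))).comp (Ideal.Quotient.mk p))
        ((∑ i : Fin n, C (f i) * X i) + C f₀)}) ≤ P := by
  set g : MvPolynomial (Fin n) R := (∑ i : Fin n, C (f i) * X i) + C f₀ with hgdef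
  set ρ := (algebraMap (R ⧸ p) (FractionRing (R ⧸ p))).comp (Ideal.Quotient.mk p) with hρ
  intro h hh
  rw [Ideal.mem_comap, Ideal.mem_span_singleton] at hh
  obtain ⟨u, hu⟩ := hh
  obtain ⟨s, w, hw⟩ := my_clear_denominators (D := R ⧸ p) u
  obtain ⟨s', hs'⟩ := Ideal.Quotient.mk_surjective (I := p) (s : R ⧸ p)
  obtain ⟨w', hw'⟩ := MvPolynomial.map_surjective _ (Ideal.Quotient.mk_surjective (I := p)) w
  have hs'p : s' ∉ p := by
    intro hmem
    have h0 : (s : R ⧸ p) = 0 := by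
      rw [← hs', Ideal.Quotient.eq_zero_iff_mem]; exact hmem
    exact nonZeroDivisors.ne_zero s.2 h0
  have hker : MvPolynomial.map (Ideal.Quotient.mk p) (C s' * h - w' * g) = 0 := by
    apply MvPolynomial.map_injective _
      (IsFractionRing.injective (R ⧸ p) (FractionRing (R ⧸ p)))
    rw [MvPolynomial.map_map]
    have e1 : (MvPolynomial.map ρ) w' = MvPolynomial.map (algebraMap (R ⧸ p) _) w := by
      rw [hρ, ← hw', ← MvPolynomial.map_map]
    have e2 : ρ s' = algebraMap (R ⧸ p) (FractionRing (R ⧸ p)) (s : R ⧸ p) := by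
      rw [hρ, RingHom.comp_apply, hs']
    rw [← hρ, map_sub, map_mul, map_mul, MvPolynomial.map_C, hu, e1, ← hw, e2, map_zero]
    ring
  have hmem : C s' * h - w' * g ∈ Ideal.map (C : R →+* MvPolynomial (Fin n) R) p := by
    rw [MvPolynomial.mem_map_C_iff]
    intro m
    have hcm := congrArg (MvPolynomial.coeff m) hker
    rw [MvPolynomial.coeff_map, MvPolynomial.coeff_zero,
      Ideal.Quotient.eq_zero_iff_mem] at hcm
    exact hcm
  have hmem' : C s' * h - w' * g ∈ P :=
    (Ideal.map_le_iff_le_comap.mpr hCP.ge) hmem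
  have hfin : C s' * h ∈ P := by
    have hwg : w' * g ∈ P := Ideal.mul_mem_left _ _ hgP
    have := add_mem hmem' hwg
    simpa using this
  have hCs' : (C s' : MvPolynomial (Fin n) R) ∉ P := by
    intro hc
    exact hs'p (by rw [← hCP]; exact hc)
  rcases hP.mem_or_mem hfin with h1 | h2
  · exact absurd h1 hCs'
  · exact h2

lemma my_span_prime (p : Ideal R) [hp : p.IsPrime]
    (P : Ideal (MvPolynomial (Fin n) R)) [hP : P.IsPrime]
    (hgP : (∑ i : Fin n, C (f i) * X i) + C f₀ ∈ P)
    (hCP : Ideal.comap (C : R →+* MvPolynomial (Fin n) R) P = p) :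
    (Ideal.span {MvPolynomial.map
        ((algebraMap (R ⧸ p) (FractionRing (R ⧸ p))).comp (Ideal.Quotient.mk p))
        ((∑ i : Fin n, C (f i) * X i) + C f₀)}).IsPrime := by
  set ρ := (algebraMap (R ⧸ p) (FractionRing (R ⧸ p))).comp (Ideal.Quotient.mk p) with hρ
  have hρker : ∀ r : R, ρ r = 0 ↔ r ∈ p := by
    intro r
    rw [hρ, RingHom.comp_apply]
    constructor
    · intro h0
      have : (Ideal.Quotient.mk p) r = 0 := by
        apply IsFractionRing.injective (R ⧸ p) (FractionRing (R ⧸ p))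
        rw [map_zero]; exact h0
      rwa [Ideal.Quotient.eq_zero_iff_mem] at this
    · intro hr
      rw [(Ideal.Quotient.eq_zero_iff_mem).mpr hr, map_zero]
  have hform : MvPolynomial.map ρ ((∑ i : Fin n, C (f i) * X i) + C f₀)
      = (∑ i : Fin n, C (ρ (f i)) * X i) + C (ρ f₀) := by
    rw [map_add, map_sum, MvPolynomial.map_C]
    congr 1
    refine Finset.sum_congr rfl fun i _ => ?_
    rw [map_mul, MvPolynomial.map_C, MvPolynomial.map_X]
  by_cases hall : ∀ i, f i ∈ p
  · have hf0 : f₀ ∈ p := by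
      have hC : ∀ i : Fin n, C (f i) * X i ∈ P := fun i =>
        Ideal.mul_mem_right _ _ (by rw [← hCP] at hall; exact hall i)
      have hsum : (∑ i : Fin n, C (f i) * X i : MvPolynomial (Fin n) R) ∈ P :=
        Ideal.sum_mem P fun i _ => hC i
      have hCf0 : (C f₀ : MvPolynomial (Fin n) R) ∈ P := by
        have := Ideal.sub_mem P hgP hsum
        simpa using this
      rw [← hCP]; exact hCf0
    have hzero : MvPolynomial.map ρ ((∑ i : Fin n, C (f i) * X i) + C f₀) = 0 := by
      rw [hform, (hρker f₀).mpr hf0]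
      simp only [C_0, add_zero]
      refine Finset.sum_eq_zero fun i _ => ?_
      rw [(hρker (f i)).mpr (hall i), C_0, zero_mul]
    rw [hzero, Set.singleton_zero, Ideal.span_zero]
    exact Ideal.bot_prime
  · push_neg at hall
    obtain ⟨i₀, hi₀⟩ := hall
    have hprime : Prime (MvPolynomial.map ρ ((∑ i : Fin n, C (f i) * X i) + C f₀)) := by
      rw [hform]
      exact my_linear_prime (fun i => ρ (f i)) (ρ f₀) i₀ (fun h0 => hi₀ ((hρker _).mp h0))
    exact (Ideal.span_singleton_prime hprime.ne_zero).mpr hprime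

end core

section assemble

variable {R : Type*} [CommRing R] {n : ℕ} {f : Fin n → R} {f₀ : R}

lemma my_exists_lower (I : Ideal (MvPolynomial (Fin n) R))
    (hI : I = Ideal.span {(∑ i : Fin n, C (f i) * X i) + C f₀})
    (x y : PrimeSpectrum (MvPolynomial (Fin n) R ⧸ I))
    (hxy : PrimeSpectrum.comap (algebraMap R (MvPolynomial (Fin n) R ⧸ I)) x
      = PrimeSpectrum.comap (algebraMap R (MvPolynomial (Fin n) R ⧸ I)) y) :
    ∃ z : PrimeSpectrum (MvPolynomial (Fin n) R ⧸ I),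
      z.asIdeal ≤ x.asIdeal ∧ z.asIdeal ≤ y.asIdeal := by
  set g : MvPolynomial (Fin n) R := (∑ i : Fin n, C (f i) * X i) + C f₀ with hgdef
  set φ := algebraMap R (MvPolynomial (Fin n) R ⧸ I) with hφ
  have halg : φ = (Ideal.Quotient.mk I).comp (C : R →+* MvPolynomial (Fin n) R) := rfl
  set p : Ideal R := Ideal.comap φ x.asIdeal with hpdef
  haveI hxp : x.asIdeal.IsPrime := x.2
  haveI hyp : y.asIdeal.IsPrime := y.2
  haveI hpp : p.IsPrime := Ideal.comap_isPrime φ x.asIdeal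
  set Px : Ideal (MvPolynomial (Fin n) R) := Ideal.comap (Ideal.Quotient.mk I) x.asIdeal with hPx
  set Py : Ideal (MvPolynomial (Fin n) R) := Ideal.comap (Ideal.Quotient.mk I) y.asIdeal with hPy
  haveI : Px.IsPrime := Ideal.comap_isPrime _ _
  haveI : Py.IsPrime := Ideal.comap_isPrime _ _
  have hgmem : ∀ z : PrimeSpectrum (MvPolynomial (Fin n) R ⧸ I),
      g ∈ Ideal.comap (Ideal.Quotient.mk I) z.asIdeal := by
    intro z
    rw [Ideal.mem_comap, Ideal.Quotient.eq_zero_iff_mem.mpr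
      (by rw [hI]; exact Ideal.subset_span (Set.mem_singleton g))]
    exact zero_mem _
  have hCx : Ideal.comap (C : R →+* MvPolynomial (Fin n) R) Px = p := by
    rw [hPx, Ideal.comap_comap, hpdef, halg]
  have hyasp : Ideal.comap φ y.asIdeal = p := by
    rw [hpdef]
    have h := congrArg PrimeSpectrum.asIdeal hxy.symm
    rwa [PrimeSpectrum.comap_asIdeal, PrimeSpectrum.comap_asIdeal] at h
  have hCy : Ideal.comap (C : R →+* MvPolynomial (Fin n) R) Py = p := by
    rw [hPy, Ideal.comap_comap, ← hyasp, halg]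
  set ρ := (algebraMap (R ⧸ p) (FractionRing (R ⧸ p))).comp (Ideal.Quotient.mk p) with hρ
  set J := Ideal.span {MvPolynomial.map ρ g} with hJ
  haveI hJp : J.IsPrime := my_span_prime f f₀ p Px (hgmem x) hCx
  set η' : Ideal (MvPolynomial (Fin n) R) := Ideal.comap (MvPolynomial.map ρ) J with hη'
  haveI : η'.IsPrime := Ideal.comap_isPrime _ _
  have hIη : RingHom.ker (Ideal.Quotient.mk I) ≤ η' := by
    rw [Ideal.mk_ker, hI, Ideal.span_le, Set.singleton_subset_iff]
    rw [SetLike.mem_coe, hη', Ideal.mem_comap, hJ]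
    exact Ideal.subset_span (Set.mem_singleton _)
  have hηprime : (Ideal.map (Ideal.Quotient.mk I) η').IsPrime :=
    Ideal.map_isPrime_of_surjective Ideal.Quotient.mk_surjective hIη
  refine ⟨⟨Ideal.map (Ideal.Quotient.mk I) η', hηprime⟩, ?_, ?_⟩
  · exact Ideal.map_le_iff_le_comap.mpr (my_fiber_lemma f f₀ p Px (hgmem x) hCx)
  · exact Ideal.map_le_iff_le_comap.mpr (my_fiber_lemma f f₀ p Py (hgmem y) hCy)

end assemble

/-- For the forcing algebra `A = R[T_1,…,T_n]/(f_1T_1+⋯+f_nT_n+f)` with forcing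
morphism `φ : Spec A → Spec R`, every connected component `C` of `Spec A` is the full
preimage under `φ` of a subset of `Spec R`; equivalently `C = φ⁻¹(φ(C))`. -/
theorem forcing_algebra_connected_components_are_preimages
    (R : Type*) [CommRing R] (n : ℕ) (f : Fin n → R) (f₀ : R) :
    ∀ x : PrimeSpectrum
        (MvPolynomial (Fin n) R ⧸
          Ideal.span {(∑ i : Fin n, C (f i) * X i) + C f₀}),
      connectedComponent x =
        (PrimeSpectrum.comap (algebraMap R
          (MvPolynomial (Fin n) R ⧸
            Ideal.span {(∑ i : Fin n, C (f i) * X i) + C f₀}))) ⁻¹'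
        ((PrimeSpectrum.comap (algebraMap R
          (MvPolynomial (Fin n) R ⧸
            Ideal.span {(∑ i : Fin n, C (f i) * X i) + C f₀}))) '' connectedComponent x) := by
  intro x
  apply Set.eq_of_subset_of_subset (Set.subset_preimage_image _ _)
  rintro z ⟨w, hw, hwz⟩
  obtain ⟨η, h1, h2⟩ := my_exists_lower _ rfl w z hwz
  have hcl : IsPreconnected (closure ({η} : Set (PrimeSpectrum _))) :=
    isIrreducible_singleton.closure.2.isPreconnected
  have hw' : w ∈ closure ({η} : Set (PrimeSpectrum _)) :=
    (PrimeSpectrum.le_iff_mem_closure η w).mp h1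
  have hz' : z ∈ closure ({η} : Set (PrimeSpectrum _)) :=
    (PrimeSpectrum.le_iff_mem_closure η z).mp h2
  have hzw : z ∈ connectedComponent w := hcl.subset_connectedComponent hw' hz'
  rwa [connectedComponent_eq hw]
end

section
/- Let R be a commutative ring, f_1,…,f_n ∈ R, let A = R[T_1,…,T_n]/(f_1T_1+⋯+f_nT_n) be the homogeneous forcing algebra (forcing element f = 0) and φ : Spec A → Spec R the forcing morphism. Then the connected components of Spec A are exactly the preimages φ^{-1}(Z) of the connected components Z of Spec R. In particular, Spec A is connected if and only if Spec R is connected. -/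
open MvPolynomial

/-- The forcing algebra `R[T_1,…,T_n]/(f_1T_1+⋯+f_nT_n+f₀)`. -/
abbrev ForcingAlgebra (R : Type*) [CommRing R] (n : ℕ) (f : Fin n → R) (f₀ : R) :=
  MvPolynomial (Fin n) R ⧸
    Ideal.span {(∑ i : Fin n, C (f i) * X i) + C f₀}

/-- A subset of a topological space is a connected component if it is the connected
component of some point. -/
def IsConnectedComponent {X : Type*} [TopologicalSpace X] (C : Set X) : Prop :=
  ∃ x : X, connectedComponent x = C


open MvPolynomial


open MvPolynomial

namespace HFA

noncomputable section

/-- generator of the homogeneous forcing ideal (matching `ForcingAlgebra _ _ _ 0`) -/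
abbrev gen {S : Type*} [CommRing S] {n : ℕ} (c : Fin n → S) : MvPolynomial (Fin n) S :=
  (∑ i : Fin n, C (c i) * X i) + C 0

variable {K : Type*} [Field K] {n : ℕ}

lemma prime_X_mv (j : Fin n) : Prime (X j : MvPolynomial (Fin n) K) := by
  classical
  let e : Fin n ≃ Option {i : Fin n // i ≠ j} := (Equiv.optionSubtypeNe j).symm
  let E : MvPolynomial (Fin n) K ≃+* Polynomial (MvPolynomial {i : Fin n // i ≠ j} K) :=
    ((renameEquiv K e).trans (optionEquivLeft K _)).toRingEquiv
  have hE : E (X j) = Polynomial.X := by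
    show (optionEquivLeft K _) ((renameEquiv K e) (X j)) = Polynomial.X
    rw [renameEquiv_apply, rename_X]
    have : e j = none := Equiv.optionSubtypeNe_symm_self j
    rw [this, optionEquivLeft_X_none]
  rw [← MulEquiv.prime_iff E.toMulEquiv]
  show Prime (E (X j))
  rw [hE]
  exact Polynomial.prime_X

lemma prime_gen (c : Fin n → K) (j : Fin n) (hcj : c j ≠ 0) : Prime (gen c) := by
  classical
  set rest : MvPolynomial (Fin n) K := ∑ i ∈ Finset.univ.erase j, C (c i) * X i with hrest
  have hsplit : gen c = C (c j) * X j + rest := by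
    rw [gen, map_zero, add_zero, ← Finset.add_sum_erase _ _ (Finset.mem_univ j)]
  have hfix : ∀ v : Fin n → MvPolynomial (Fin n) K, (∀ i, i ≠ j → v i = X i) →
      aeval v rest = rest := by
    intro v hv
    rw [hrest, map_sum]
    refine Finset.sum_congr rfl fun i hi => ?_
    have hij : i ≠ j := Finset.ne_of_mem_erase hi
    rw [map_mul, aeval_C, aeval_X, hv i hij, algebraMap_eq]
  let τ' : MvPolynomial (Fin n) K →ₐ[K] MvPolynomial (Fin n) K :=
    aeval (Function.update X j (C (c j) * X j + rest))
  let τ : MvPolynomial (Fin n) K →ₐ[K] MvPolynomial (Fin n) K :=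
    aeval (Function.update X j (C (c j)⁻¹ * (X j - rest)))
  have hupd : ∀ i, i ≠ j → (Function.update X j (C (c j) * X j + rest)) i = X i :=
    fun i hij => Function.update_of_ne hij _ _
  have hupd' : ∀ i, i ≠ j → (Function.update X j (C (c j)⁻¹ * (X j - rest))) i = X i :=
    fun i hij => Function.update_of_ne hij _ _
  have hττ' : τ.comp τ' = AlgHom.id K _ := by
    apply algHom_ext
    intro i
    by_cases hij : i = j
    · subst hij
      show τ (τ' (X i)) = X i
      rw [show τ' (X i) = C (c i) * X i + rest from by
        rw [show τ' (X i) = _ from aeval_X _ i, Function.update_self]]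
      rw [map_add, map_mul, hfix _ hupd', show τ (X i) = _ from aeval_X _ i,
        Function.update_self, aeval_C, algebraMap_eq, ← mul_assoc, ← C_mul,
        mul_inv_cancel₀ hcj, C_1, one_mul, sub_add_cancel]
    · show τ (τ' (X i)) = X i
      rw [show τ' (X i) = _ from aeval_X _ i, hupd i hij,
        show τ (X i) = _ from aeval_X _ i, hupd' i hij]
  have hτ'τ : τ'.comp τ = AlgHom.id K _ := by
    apply algHom_ext
    intro i
    by_cases hij : i = j
    · subst hij
      show τ' (τ (X i)) = X i
      rw [show τ (X i) = C (c i)⁻¹ * (X i - rest) from by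
        rw [show τ (X i) = _ from aeval_X _ i, Function.update_self]]
      rw [map_mul, map_sub, hfix _ hupd, show τ' (X i) = _ from aeval_X _ i,
        Function.update_self, aeval_C, algebraMap_eq, add_sub_cancel_right,
        ← mul_assoc, ← C_mul, inv_mul_cancel₀ hcj, C_1, one_mul]
    · show τ' (τ (X i)) = X i
      rw [show τ (X i) = _ from aeval_X _ i, hupd' i hij,
        show τ' (X i) = _ from aeval_X _ i, hupd i hij]
  let E : MvPolynomial (Fin n) K ≃ₐ[K] MvPolynomial (Fin n) K :=
    AlgEquiv.ofAlgHom τ' τ hτ'τ hττ'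
  have hEX : E.toRingEquiv (X j) = gen c := by
    show τ' (X j) = gen c
    rw [show τ' (X j) = _ from aeval_X _ j, Function.update_self, hsplit]
  rw [← hEX]
  exact ((MulEquiv.prime_iff E.toRingEquiv.toMulEquiv).mpr (prime_X_mv j))

lemma isDomain_forcing (c : Fin n → K) :
    IsDomain (MvPolynomial (Fin n) K ⧸ Ideal.span {gen c}) := by
  by_cases h : ∀ i, c i = 0
  · have hg : gen c = 0 := by simp [gen, h]
    have hsp : Ideal.span {gen c} = ⊥ := by
      rw [hg, Ideal.span_singleton_eq_bot]
    haveI : (Ideal.span {gen c}).IsPrime := hsp ▸ Ideal.bot_prime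
    infer_instance
  · push_neg at h
    obtain ⟨j, hj⟩ := h
    have hp := prime_gen c j hj
    haveI : (Ideal.span {gen c}).IsPrime := (Ideal.span_singleton_prime hp.ne_zero).mpr hp
    infer_instance

end
end HFA

namespace HFA2

noncomputable section

abbrev gen {S : Type*} [CommRing S] {n : ℕ} (c : Fin n → S) : MvPolynomial (Fin n) S :=
  (∑ i : Fin n, C (c i) * X i) + C 0

variable {R : Type*} [CommRing R] {n : ℕ} (f : Fin n → R)

/-- the retraction `A → R`, `T_i ↦ 0`. -/
def ε : (MvPolynomial (Fin n) R ⧸ Ideal.span {gen f}) →+* R :=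
  Ideal.Quotient.lift _
    ((aeval (fun _ => (0 : R)) : MvPolynomial (Fin n) R →ₐ[R] R) :
      MvPolynomial (Fin n) R →+* R)
    (by
      intro a ha
      rw [Ideal.mem_span_singleton'] at ha
      obtain ⟨b, hb⟩ := ha
      rw [← hb, map_mul]
      have h0 : (aeval (fun _ => (0 : R))) (gen f) = 0 := by simp [gen]
      show (aeval (fun _ => (0 : R))) b * (aeval (fun _ => (0 : R))) (gen f) = 0
      rw [h0, mul_zero])


lemma eps_algebraMap (a : R) :
    ε f (algebraMap R (MvPolynomial (Fin n) R ⧸ Ideal.span {gen f}) a) = a := by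
  rw [← Ideal.Quotient.mk_algebraMap, MvPolynomial.algebraMap_eq]
  show (aeval (fun _ => (0 : R))) (C a) = a
  simp

lemma comap_eps_section (x : PrimeSpectrum R) :
    PrimeSpectrum.comap (algebraMap R (MvPolynomial (Fin n) R ⧸ Ideal.span {gen f}))
      (PrimeSpectrum.comap (ε f) x) = x := by
  rw [← PrimeSpectrum.comap_comp_apply]
  have h : (ε f).comp (algebraMap R (MvPolynomial (Fin n) R ⧸ Ideal.span {gen f})) =
      RingHom.id R := by
    ext a
    exact eps_algebraMap f a
  rw [h, PrimeSpectrum.comap_id]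


set_option maxHeartbeats 1000000 in
lemma fiber_preconnected_aux (p : PrimeSpectrum R)
    (K : Type*) [Field K] (r : R →+* K)
    (hker : ∀ a : R, r a = 0 ↔ a ∈ p.asIdeal)
    (P1 : ∀ x : K, ∃ s : R, s ∉ p.asIdeal ∧ ∃ a : R, x * r s = r a) :
    IsPreconnected
      (PrimeSpectrum.comap (algebraMap R (MvPolynomial (Fin n) R ⧸ Ideal.span {gen f}))
        ⁻¹' {p}) := by
  classical
  haveI hpP : p.asIdeal.IsPrime := p.2
  have P2 : ∀ w : MvPolynomial (Fin n) K, ∃ s : R, s ∉ p.asIdeal ∧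
      ∃ v : MvPolynomial (Fin n) R, MvPolynomial.map r v = C (r s) * w := by
    intro w
    induction w using MvPolynomial.induction_on with
    | C a =>
      obtain ⟨s, hs, b, hb⟩ := P1 a
      exact ⟨s, hs, C b, by rw [map_C, ← hb, C_mul, mul_comm]⟩
    | add w1 w2 ih1 ih2 =>
      obtain ⟨s1, hs1, v1, h1⟩ := ih1
      obtain ⟨s2, hs2, v2, h2⟩ := ih2
      refine ⟨s1 * s2, fun hsp => ((hpP.mem_or_mem hsp).elim hs1 hs2), C s2 * v1 + C s1 * v2, ?_⟩
      rw [map_add, map_mul, map_mul, map_C, map_C, h1, h2, map_mul, C_mul]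
      ring
    | mul_X w i ih =>
      obtain ⟨s, hs, v, h⟩ := ih
      exact ⟨s, hs, v * X i, by rw [map_mul, map_X, h, mul_assoc]⟩
  set c : Fin n → K := fun i => r (f i) with hc
  have hmapgen : MvPolynomial.map r (gen f) = gen c := by
    rw [gen, gen, map_add, MvPolynomial.map_C, map_zero, map_sum]
    congr 1
    refine Finset.sum_congr rfl fun i _ => ?_
    rw [map_mul, MvPolynomial.map_C, MvPolynomial.map_X]
  haveI hdom : IsDomain (MvPolynomial (Fin n) K ⧸ Ideal.span {gen c}) :=
    HFA.isDomain_forcing c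
  haveI hnt : Nontrivial (MvPolynomial (Fin n) K ⧸ Ideal.span {gen c}) :=
    hdom.toNontrivial
  set ψ : (MvPolynomial (Fin n) R ⧸ Ideal.span {gen f}) →+*
      (MvPolynomial (Fin n) K ⧸ Ideal.span {gen c}) :=
    Ideal.quotientMap (Ideal.span {gen c}) (MvPolynomial.map r)
      (by
        rw [Ideal.span_le]
        rintro x rfl
        exact Ideal.mem_comap.mpr (by rw [hmapgen]; exact Ideal.subset_span (Set.mem_singleton _))) with hψ
  have hψmk : ∀ g : MvPolynomial (Fin n) R,
      ψ (Ideal.Quotient.mk _ g) = Ideal.Quotient.mk _ (MvPolynomial.map r g) :=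
    fun g => Ideal.quotientMap_mk
  set q0 : PrimeSpectrum (MvPolynomial (Fin n) R ⧸ Ideal.span {gen f}) :=
    ⟨RingHom.ker ψ, RingHom.ker_isPrime ψ⟩ with hq0
  -- membership in ker ψ for elements coming from R
  have halg : ∀ a : R,
      algebraMap R (MvPolynomial (Fin n) R ⧸ Ideal.span {gen f}) a =
        Ideal.Quotient.mk _ (C a) := by
    intro a
    rw [← Ideal.Quotient.mk_algebraMap, MvPolynomial.algebraMap_eq]
  have hq0p : PrimeSpectrum.comap
      (algebraMap R (MvPolynomial (Fin n) R ⧸ Ideal.span {gen f})) q0 = p := by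
    apply PrimeSpectrum.ext
    ext a
    rw [PrimeSpectrum.comap_asIdeal, Ideal.mem_comap]
    show algebraMap R _ a ∈ RingHom.ker ψ ↔ a ∈ p.asIdeal
    rw [RingHom.mem_ker, halg, hψmk, map_C, Ideal.Quotient.eq_zero_iff_mem]
    constructor
    · intro hmem
      by_contra hap
      have hra : r a ≠ 0 := fun h0 => hap ((hker a).mp h0)
      have hunit : IsUnit (C (r a) : MvPolynomial (Fin n) K) :=
        (isUnit_iff_ne_zero.mpr hra).map (C : K →+* MvPolynomial (Fin n) K)
      have htop : Ideal.span {gen c} = ⊤ := Ideal.eq_top_of_isUnit_mem _ hmem hunit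
      have : Subsingleton (MvPolynomial (Fin n) K ⧸ Ideal.span {gen c}) :=
        Ideal.Quotient.subsingleton_iff.mpr htop
      exact not_subsingleton _ this
    · intro hap
      rw [(hker a).mpr hap, map_zero]
      exact Ideal.zero_mem _
  -- minimality of q0 in the fiber
  have hmin : ∀ q : PrimeSpectrum (MvPolynomial (Fin n) R ⧸ Ideal.span {gen f}),
      PrimeSpectrum.comap (algebraMap R _) q = p → RingHom.ker ψ ≤ q.asIdeal := by
    intro q hq a ha
    obtain ⟨g, rfl⟩ := Ideal.Quotient.mk_surjective a
    have hmem : MvPolynomial.map r g ∈ Ideal.span {gen c} := by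
      rw [RingHom.mem_ker, hψmk, Ideal.Quotient.eq_zero_iff_mem] at ha
      exact ha
    obtain ⟨w, hw⟩ := Ideal.mem_span_singleton'.mp hmem
    obtain ⟨s, hs, v, hv⟩ := P2 w
    have hzero : MvPolynomial.map r (C s * g - v * gen f) = 0 := by
      rw [map_sub, map_mul, map_mul, map_C, hv, hmapgen, ← hw]
      ring
    set Q : Ideal (MvPolynomial (Fin n) R) :=
      q.asIdeal.comap (Ideal.Quotient.mk (Ideal.span {gen f})) with hQ
    haveI hQp : Q.IsPrime := Ideal.comap_isPrime _ _
    have hmemR : ∀ b : R, b ∈ p.asIdeal ↔ C b ∈ Q := by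
      intro b
      rw [← hq, PrimeSpectrum.comap_asIdeal, Ideal.mem_comap, halg, hQ, Ideal.mem_comap]
    have hQgen : gen f ∈ Q := by
      have hmk0 : (Ideal.Quotient.mk (Ideal.span {gen f})) (gen f) = 0 :=
        Ideal.Quotient.eq_zero_iff_mem.mpr (Ideal.subset_span (Set.mem_singleton _))
      rw [hQ, Ideal.mem_comap, hmk0]
      exact q.asIdeal.zero_mem
    have hd : C s * g - v * gen f ∈ Q := by
      have hcoeff : ∀ m, coeff m (C s * g - v * gen f) ∈ p.asIdeal := by
        intro m
        apply (hker _).mp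
        rw [← MvPolynomial.coeff_map, hzero, coeff_zero]
      have hmapC : (C s * g - v * gen f) ∈ Ideal.map (C : R →+* MvPolynomial (Fin n) R)
          p.asIdeal := MvPolynomial.mem_map_C_iff.mpr hcoeff
      have hle : Ideal.map (C : R →+* MvPolynomial (Fin n) R) p.asIdeal ≤ Q := by
        rw [Ideal.map_le_iff_le_comap]
        intro b hb
        exact Ideal.mem_comap.mpr ((hmemR b).mp hb)
      exact hle hmapC
    have hsg : C s * g ∈ Q := by
      have := Q.add_mem hd (Q.mul_mem_left v hQgen)
      rwa [sub_add_cancel] at this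
    have hCs : C s ∉ Q := fun hcs => hs ((hmemR s).mpr hcs)
    have hgQ : g ∈ Q := ((hQp.mem_or_mem hsg).resolve_left hCs)
    exact hgQ
  -- the fiber is preconnected
  apply isPreconnected_of_forall q0
  intro q hqmem
  have hq : PrimeSpectrum.comap (algebraMap R _) q = p := hqmem
  have hq0mem : q0 ∈ PrimeSpectrum.comap
      (algebraMap R (MvPolynomial (Fin n) R ⧸ Ideal.span {gen f})) ⁻¹' {p} := hq0p
  have hspec : q0 ⤳ q := (PrimeSpectrum.le_iff_specializes q0 q).mp (hmin q hq)
  refine ⟨{q0, q}, ?_, Set.mem_insert _ _, Set.mem_insert_of_mem _ rfl, ?_⟩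
  · rintro z (rfl | rfl)
    · exact hq0mem
    · exact hqmem
  · apply isPreconnected_singleton.subset_closure (s := {q0})
    · intro z hz
      rw [hz]
      exact Set.mem_insert _ _
    · rintro z (rfl | rfl)
      · exact subset_closure rfl
      · exact specializes_iff_mem_closure.mp hspec

set_option maxHeartbeats 1000000 in
lemma fiber_preconnected (p : PrimeSpectrum R) :
    IsPreconnected
      (PrimeSpectrum.comap (algebraMap R (MvPolynomial (Fin n) R ⧸ Ideal.span {gen f}))
        ⁻¹' {p}) := by
  haveI hpP : p.asIdeal.IsPrime := p.2
  refine fiber_preconnected_aux f p (FractionRing (R ⧸ p.asIdeal))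
    ((algebraMap (R ⧸ p.asIdeal) (FractionRing (R ⧸ p.asIdeal))).comp
      (Ideal.Quotient.mk p.asIdeal)) ?_ ?_
  · intro a
    rw [RingHom.comp_apply,
      map_eq_zero_iff _ (IsFractionRing.injective (R ⧸ p.asIdeal) (FractionRing (R ⧸ p.asIdeal))),
      Ideal.Quotient.eq_zero_iff_mem]
  · intro x
    obtain ⟨⟨a', s'⟩, hx⟩ := IsLocalization.mk'_surjective (nonZeroDivisors (R ⧸ p.asIdeal)) x
    obtain ⟨a, rfl⟩ := Ideal.Quotient.mk_surjective a'
    obtain ⟨s, hs⟩ := Ideal.Quotient.mk_surjective (s' : R ⧸ p.asIdeal)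
    refine ⟨s, ?_, a, ?_⟩
    · intro hsp
      have h0 : (s' : R ⧸ p.asIdeal) = 0 := by
        rw [← hs, Ideal.Quotient.eq_zero_iff_mem]; exact hsp
      exact nonZeroDivisors.ne_zero s'.2 h0
    · rw [RingHom.comp_apply, RingHom.comp_apply, hs, ← hx]
      exact IsLocalization.mk'_spec (FractionRing (R ⧸ p.asIdeal)) _ s'

set_option maxHeartbeats 1000000 in
lemma preimage_cc_preconnected (x : PrimeSpectrum R) :
    IsPreconnected
      (PrimeSpectrum.comap (algebraMap R (MvPolynomial (Fin n) R ⧸ Ideal.span {gen f}))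
        ⁻¹' connectedComponent x) := by
  have hφσ : ∀ z, PrimeSpectrum.comap (algebraMap R (MvPolynomial (Fin n) R ⧸ Ideal.span {gen f}))
      (PrimeSpectrum.comap (ε f) z) = z := comap_eps_section f
  set c : Set (Set (PrimeSpectrum (MvPolynomial (Fin n) R ⧸ Ideal.span {gen f}))) :=
    (fun z => (PrimeSpectrum.comap (ε f)) '' connectedComponent x ∪
      (PrimeSpectrum.comap (algebraMap R (MvPolynomial (Fin n) R ⧸ Ideal.span {gen f})))
        ⁻¹' {z}) '' connectedComponent x with hc
  have hx : x ∈ connectedComponent x := mem_connectedComponent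
  have hmem : ∀ t ∈ c, (PrimeSpectrum.comap (ε f)) x ∈ t := by
    rintro t ⟨z, hz, rfl⟩
    exact Or.inl ⟨x, hx, rfl⟩
  have hpc : ∀ t ∈ c, IsPreconnected t := by
    rintro t ⟨z, hz, rfl⟩
    apply IsPreconnected.union (PrimeSpectrum.comap (ε f) z)
    · exact ⟨z, hz, rfl⟩
    · show PrimeSpectrum.comap (algebraMap R (MvPolynomial (Fin n) R ⧸ Ideal.span {gen f}))
        (PrimeSpectrum.comap (ε f) z) ∈ ({z} : Set (PrimeSpectrum R))
      rw [hφσ z]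
      rfl
    · exact isPreconnected_connectedComponent.image _
        (PrimeSpectrum.continuous_comap (ε f)).continuousOn
    · exact fiber_preconnected f z
  have hun : ⋃₀ c =
      (PrimeSpectrum.comap (algebraMap R (MvPolynomial (Fin n) R ⧸ Ideal.span {gen f})))
        ⁻¹' connectedComponent x := by
    apply Set.Subset.antisymm
    · rintro y ⟨t, ⟨z, hz, rfl⟩, hy⟩
      rcases hy with h | h
      · obtain ⟨z', hz', rfl⟩ := h
        show PrimeSpectrum.comap (algebraMap R (MvPolynomial (Fin n) R ⧸ Ideal.span {gen f}))
          (PrimeSpectrum.comap (ε f) z') ∈ connectedComponent x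
        rw [hφσ z']
        exact hz'
      · have hyz : PrimeSpectrum.comap
            (algebraMap R (MvPolynomial (Fin n) R ⧸ Ideal.span {gen f})) y = z := h
        show PrimeSpectrum.comap (algebraMap R (MvPolynomial (Fin n) R ⧸ Ideal.span {gen f})) y
          ∈ connectedComponent x
        rw [hyz]
        exact hz
    · intro y hy
      exact ⟨_, ⟨PrimeSpectrum.comap (algebraMap R _) y, hy, rfl⟩, Or.inr rfl⟩
  rw [← hun]
  exact isPreconnected_sUnion (PrimeSpectrum.comap (ε f) x) c hmem hpc

set_option maxHeartbeats 1000000 in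
lemma cc_eq (y : PrimeSpectrum (MvPolynomial (Fin n) R ⧸ Ideal.span {gen f})) :
    connectedComponent y =
      PrimeSpectrum.comap (algebraMap R (MvPolynomial (Fin n) R ⧸ Ideal.span {gen f}))
        ⁻¹' connectedComponent
          (PrimeSpectrum.comap (algebraMap R (MvPolynomial (Fin n) R ⧸ Ideal.span {gen f})) y) := by
  apply Set.Subset.antisymm
  · intro z hz
    exact (PrimeSpectrum.continuous_comap
      (algebraMap R (MvPolynomial (Fin n) R ⧸ Ideal.span {gen f}))).image_connectedComponent_subset
      y ⟨z, hz, rfl⟩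
  · exact (preimage_cc_preconnected f _).subset_connectedComponent mem_connectedComponent

end
end HFA2


set_option maxHeartbeats 1000000 in
/-- For the homogeneous forcing algebra `A = R[T_1,…,T_n]/(f_1T_1+⋯+f_nT_n)`
with forcing morphism `φ : Spec A → Spec R`, the connected components of `Spec A` are
exactly the preimages `φ⁻¹(Z)` of the connected components `Z` of `Spec R`; in particular
`Spec A` is connected iff `Spec R` is connected. -/
theorem homogeneous_forcing_algebra_connected_components
    (R : Type*) [CommRing R] (n : ℕ) (f : Fin n → R) :
    (∀ C : Set (PrimeSpectrum (ForcingAlgebra R n f 0)),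
      IsConnectedComponent C ↔
        ∃ Z : Set (PrimeSpectrum R), IsConnectedComponent Z ∧
          C = PrimeSpectrum.comap (algebraMap R (ForcingAlgebra R n f 0)) ⁻¹' Z) ∧
    (ConnectedSpace (PrimeSpectrum (ForcingAlgebra R n f 0)) ↔
      ConnectedSpace (PrimeSpectrum R)) := by
  constructor
  · intro C
    constructor
    · rintro ⟨y, rfl⟩
      exact ⟨connectedComponent (PrimeSpectrum.comap (algebraMap R (ForcingAlgebra R n f 0)) y),
        ⟨_, rfl⟩, HFA2.cc_eq f y⟩
    · rintro ⟨Z, ⟨x, rfl⟩, rfl⟩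
      refine ⟨PrimeSpectrum.comap (HFA2.ε f) x, ?_⟩
      rw [HFA2.cc_eq f _, HFA2.comap_eps_section f x]
  · constructor
    · intro h
      obtain ⟨y⟩ := h.toNonempty
      have hsurj : Function.Surjective
          (PrimeSpectrum.comap (algebraMap R (ForcingAlgebra R n f 0))) :=
        fun x => ⟨PrimeSpectrum.comap (HFA2.ε f) x, HFA2.comap_eps_section f x⟩
      haveI : PreconnectedSpace (PrimeSpectrum R) := by
        constructor
        have himg : PrimeSpectrum.comap (algebraMap R (ForcingAlgebra R n f 0)) ''
            Set.univ = Set.univ := by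
          rw [Set.image_univ]
          exact Set.range_eq_univ.mpr hsurj
        rw [← himg]
        exact isPreconnected_univ.image _
          (PrimeSpectrum.continuous_comap (algebraMap R (ForcingAlgebra R n f 0))).continuousOn
      exact { toNonempty :=
        ⟨PrimeSpectrum.comap (algebraMap R (ForcingAlgebra R n f 0)) y⟩ }
    · intro h
      obtain ⟨x⟩ := h.toNonempty
      have hcc : connectedComponent x = Set.univ :=
        PreconnectedSpace.connectedComponent_eq_univ x
      have huniv : connectedComponent (PrimeSpectrum.comap (HFA2.ε f) x) =
          (Set.univ : Set (PrimeSpectrum (ForcingAlgebra R n f 0))) := by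
        rw [HFA2.cc_eq f _, HFA2.comap_eps_section f x, hcc, Set.preimage_univ]
      haveI : PreconnectedSpace (PrimeSpectrum (ForcingAlgebra R n f 0)) :=
        ⟨huniv ▸ isPreconnected_connectedComponent⟩
      exact { toNonempty := ⟨PrimeSpectrum.comap (HFA2.ε f) x⟩ }
end

section
/- Let R be a commutative ring, f_1,…,f_n, f ∈ R, let A = R[T_1,…,T_n]/(f_1T_1+⋯+f_nT_n+f) be the forcing algebra and φ : Spec A → Spec R the forcing morphism. If φ is a submersion, i.e. φ is surjective and a subset T ⊆ Spec R is open if and only if φ^{-1}(T) is open, then the connected components of Spec A are exactly the preimages φ^{-1}(Z) of the connected components Z of Spec R; in particular, Spec A is connected if and only if Spec R is connected. -/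
open MvPolynomial

lemma span_linear_isPrime {K : Type*} [Field K] {n : ℕ} (c : Fin n → K) (c0 : K)
    (j : Fin n) (hc : c j ≠ 0) :
    (Ideal.span {(∑ i : Fin n, C (c i) * X i) + C c0}).IsPrime := by
  obtain ⟨m, rfl⟩ : ∃ m, n = m + 1 :=
    Nat.exists_eq_succ_of_ne_zero (by rintro rfl; exact j.elim0)
  classical
  set e : Fin (m + 1) ≃ Fin (m + 1) := Equiv.swap j 0 with he
  set E : MvPolynomial (Fin (m + 1)) K ≃ₐ[K] Polynomial (MvPolynomial (Fin m) K) :=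
    (renameEquiv K e).trans (finSuccEquiv K m) with hE
  set g : MvPolynomial (Fin (m + 1)) K := (∑ i : Fin (m + 1), C (c i) * X i) + C c0 with hg
  have hEC : ∀ a : K, E (C a) = Polynomial.C (MvPolynomial.C a) := by
    intro a
    have : (C a : MvPolynomial (Fin (m + 1)) K) = algebraMap K _ a := rfl
    rw [this, AlgEquiv.commutes, Polynomial.algebraMap_apply]
    rfl
  have hEX : ∀ i, E (X i) = finSuccEquiv K m (X (e i)) := by
    intro i
    simp [hE, renameEquiv_apply, rename_X]
  have hj : E (C (c j) * X j) = Polynomial.C (MvPolynomial.C (c j)) * Polynomial.X := by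
    rw [map_mul, hEC, hEX, he, Equiv.swap_apply_left, finSuccEquiv_X_zero]
  have hterm : ∀ i, i ≠ j → ∃ b : MvPolynomial (Fin m) K,
      E (C (c i) * X i) = Polynomial.C b := by
    intro i hi
    have h0 : e i ≠ 0 := by
      rw [he]
      intro h
      apply hi
      have := (Equiv.swap j 0).injective (h.trans (Equiv.swap_apply_left j 0).symm)
      exact this
    refine ⟨C (c i) * X ((e i).pred h0), ?_⟩
    rw [map_mul, hEC, hEX]
    rw [show X (e i) = X (Fin.succ ((e i).pred h0)) by rw [Fin.succ_pred]]
    rw [finSuccEquiv_X_succ, ← Polynomial.C_mul]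
  -- decompose q
  set q : Polynomial (MvPolynomial (Fin m) K) := E g with hq
  have hconst : ∀ i ∈ Finset.univ.erase j, E (C (c i) * X i)
      = Polynomial.C ((E (C (c i) * X i)).coeff 0) := by
    intro i hi
    obtain ⟨b, hb⟩ := hterm i (Finset.mem_erase.mp hi).1
    rw [hb, Polynomial.coeff_C_zero]
  have hqeq : q = Polynomial.C (MvPolynomial.C (c j)) * Polynomial.X +
      Polynomial.C ((∑ i ∈ Finset.univ.erase j, (E (C (c i) * X i)).coeff 0) + C c0) := by
    rw [hq, hg, map_add, map_sum, hEC,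
      ← Finset.add_sum_erase Finset.univ (fun i => E (C (c i) * X i)) (Finset.mem_univ j), hj,
      Finset.sum_congr rfl hconst, ← map_sum (Polynomial.C) _ _, add_assoc, ← Polynomial.C_add]
  set u : MvPolynomial (Fin m) K := MvPolynomial.C (c j) with hu
  set r : MvPolynomial (Fin m) K :=
    (∑ i ∈ Finset.univ.erase j, (E (C (c i) * X i)).coeff 0) + C c0 with hr
  have huu : IsUnit u := (IsUnit.mk0 (c j) hc).map (C : K →+* MvPolynomial (Fin m) K)
  set x : MvPolynomial (Fin m) K := -(MvPolynomial.C ((c j)⁻¹) * r) with hx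
  have hkey : u * x = -r := by
    rw [hx, hu, mul_neg, ← mul_assoc, ← MvPolynomial.C_mul, mul_inv_cancel₀ hc,
      MvPolynomial.C_1, one_mul]
  have hqfact : q = Polynomial.C u * (Polynomial.X - Polynomial.C x) := by
    rw [hqeq, mul_sub, ← Polynomial.C_mul, hkey, Polynomial.C_neg, sub_neg_eq_add]
  have hspan : Ideal.span {q} = Ideal.span {Polynomial.X - Polynomial.C x} := by
    rw [Ideal.span_singleton_eq_span_singleton]
    exact ⟨(huu.map (Polynomial.C : _ →+* Polynomial (MvPolynomial (Fin m) K))).unit⁻¹, by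
      rw [hqfact, mul_right_comm, IsUnit.mul_val_inv, one_mul]⟩
  have hdom : IsDomain (Polynomial (MvPolynomial (Fin m) K) ⧸
      Ideal.span {Polynomial.X - Polynomial.C x}) := by
    exact Function.Injective.isDomain (Polynomial.quotientSpanXSubCAlgEquiv x).toRingEquiv.toRingHom
      (Polynomial.quotientSpanXSubCAlgEquiv x).toRingEquiv.injective
  have hq_prime : (Ideal.span {q}).IsPrime := by
    rw [hspan]
    exact (Ideal.Quotient.isDomain_iff_prime _).mp hdom
  -- transfer back along E
  have hmap : Ideal.span {q} =
      Ideal.map (E : MvPolynomial (Fin (m+1)) K →+* Polynomial (MvPolynomial (Fin m) K))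
        (Ideal.span {g}) := by
    rw [Ideal.map_span, Set.image_singleton]
    rfl
  have : Ideal.span {g} = Ideal.comap
      (E : MvPolynomial (Fin (m+1)) K →+* Polynomial (MvPolynomial (Fin m) K))
      (Ideal.span {q}) := by
    rw [hmap, Ideal.comap_map_of_bijective
      (E : MvPolynomial (Fin (m+1)) K →+* Polynomial (MvPolynomial (Fin m) K)) E.bijective]
  rw [this]
  exact hq_prime.comap _


lemma preimage_preconnected_of_quotient {X Y : Type*} [TopologicalSpace X] [TopologicalSpace Y]
    (φ : Y → X) (hsurj : Function.Surjective φ)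
    (hq : ∀ T : Set X, IsOpen T ↔ IsOpen (φ ⁻¹' T))
    (hfib : ∀ x : X, IsPreconnected (φ ⁻¹' {x}))
    {Z : Set X} (hZc : IsClosed Z) (hZ : IsPreconnected Z) :
    IsPreconnected (φ ⁻¹' Z) := by
  have hcont : Continuous φ := continuous_def.mpr fun T hT => (hq T).1 hT
  rintro u v hu hv hcover ⟨y₁, hy₁, hy₁u⟩ ⟨y₂, hy₂, hy₂v⟩
  by_contra hne
  rw [Set.not_nonempty_iff_eq_empty] at hne
  have hdisj : ∀ y, y ∈ φ ⁻¹' Z → y ∈ u → y ∈ v → False := fun y h hu' hv' =>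
    Set.eq_empty_iff_forall_notMem.mp hne y ⟨h, hu', hv'⟩
  set U : Set X := {x | x ∈ Z ∧ φ ⁻¹' {x} ⊆ u} with hUdef
  set V : Set X := {x | x ∈ Z ∧ φ ⁻¹' {x} ⊆ v} with hVdef
  have hfibZ : ∀ x, x ∈ Z → φ ⁻¹' {x} ⊆ φ ⁻¹' Z := by
    intro x hx y hy
    simp only [Set.mem_preimage, Set.mem_singleton_iff] at hy
    simp [Set.mem_preimage, hy, hx]
  have htri : ∀ x, x ∈ Z → φ ⁻¹' {x} ⊆ u ∨ φ ⁻¹' {x} ⊆ v := by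
    intro x hx
    by_contra hcon
    push_neg at hcon
    obtain ⟨hnu, hnv⟩ := hcon
    obtain ⟨a, ha, hau⟩ := Set.not_subset.mp hnu
    obtain ⟨b, hb, hbv⟩ := Set.not_subset.mp hnv
    have hav : a ∈ v := by
      rcases hcover (hfibZ x hx ha) with h | h
      · exact absurd h hau
      · exact h
    have hbu : b ∈ u := by
      rcases hcover (hfibZ x hx hb) with h | h
      · exact h
      · exact absurd h hbv
    obtain ⟨c, hc, hcu, hcv⟩ := hfib x u v hu hv
      (fun y hy => hcover (hfibZ x hx hy)) ⟨b, hb, hbu⟩ ⟨a, ha, hav⟩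
    exact hdisj c (hfibZ x hx hc) hcu hcv
  have hU : φ ⁻¹' U = φ ⁻¹' Z ∩ u := by
    ext y
    constructor
    · rintro ⟨hyZ, hyu⟩
      exact ⟨hyZ, hyu rfl⟩
    · rintro ⟨hyZ, hyu⟩
      refine ⟨hyZ, ?_⟩
      rcases htri (φ y) hyZ with h | h
      · exact h
      · exact absurd (hdisj y hyZ hyu (h rfl)) not_false
  have hV : φ ⁻¹' V = φ ⁻¹' Z ∩ v := by
    ext y
    constructor
    · rintro ⟨hyZ, hyv⟩
      exact ⟨hyZ, hyv rfl⟩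
    · rintro ⟨hyZ, hyv⟩
      refine ⟨hyZ, ?_⟩
      rcases htri (φ y) hyZ with h | h
      · exact absurd (hdisj y hyZ (h rfl) hyv) not_false
      · exact h
  have hZUV : ∀ x, x ∈ Z → x ∈ U ∨ x ∈ V := fun x hx =>
    (htri x hx).imp (fun h => ⟨hx, h⟩) (fun h => ⟨hx, h⟩)
  have hUV : ∀ x, x ∈ U → x ∈ V → False := by
    rintro x ⟨hx, hxu⟩ ⟨-, hxv⟩
    obtain ⟨y, rfl⟩ := hsurj x
    exact hdisj y (hfibZ _ hx rfl) (hxu rfl) (hxv rfl)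
  have hZu : φ ⁻¹' Z ∩ u = φ ⁻¹' Z ∩ vᶜ := by
    ext y
    constructor
    · rintro ⟨h1, h2⟩
      exact ⟨h1, fun hv' => hdisj y h1 h2 hv'⟩
    · rintro ⟨h1, h2⟩
      refine ⟨h1, ?_⟩
      rcases hcover h1 with h | h
      · exact h
      · exact absurd h h2
  have hZv : φ ⁻¹' Z ∩ v = φ ⁻¹' Z ∩ uᶜ := by
    ext y
    constructor
    · rintro ⟨h1, h2⟩
      exact ⟨h1, fun hu' => hdisj y h1 hu' h2⟩
    · rintro ⟨h1, h2⟩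
      refine ⟨h1, ?_⟩
      rcases hcover h1 with h | h
      · exact absurd h h2
      · exact h
  have hUc : IsClosed U := by
    rw [← isOpen_compl_iff, hq, Set.preimage_compl, hU, hZu]
    exact ((hZc.preimage hcont).inter (hv.isClosed_compl)).isOpen_compl
  have hVc : IsClosed V := by
    rw [← isOpen_compl_iff, hq, Set.preimage_compl, hV, hZv]
    exact ((hZc.preimage hcont).inter (hu.isClosed_compl)).isOpen_compl
  have hcov' : Z ⊆ Vᶜ ∪ Uᶜ := by
    intro x hx
    rcases hZUV x hx with h | h
    · exact Or.inl fun h' => hUV x h h'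
    · exact Or.inr fun h' => hUV x h' h
  have hn1 : (Z ∩ Vᶜ).Nonempty := by
    refine ⟨φ y₁, hy₁, fun h => ?_⟩
    exact hdisj y₁ hy₁ hy₁u (h.2 rfl)
  have hn2 : (Z ∩ Uᶜ).Nonempty := by
    refine ⟨φ y₂, hy₂, fun h => ?_⟩
    exact hdisj y₂ hy₂ (h.2 rfl) hy₂v
  obtain ⟨x, hxZ, hxV, hxU⟩ := hZ Vᶜ Uᶜ hVc.isOpen_compl hUc.isOpen_compl hcov' hn1 hn2
  rcases hZUV x hxZ with h | h
  · exact hxU h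
  · exact hxV h

lemma exists_map_eq {σ Rp K : Type*} [CommRing Rp] [CommRing K] (f : Rp →+* K)
    (q : MvPolynomial σ K) (h : ∀ m, ∃ y, f y = q.coeff m) :
    ∃ w, MvPolynomial.map f w = q := by
  classical
  choose φ hφ using h
  refine ⟨∑ m ∈ q.support, MvPolynomial.monomial m (φ m), ?_⟩
  rw [map_sum]
  simp_rw [MvPolynomial.map_monomial, hφ]
  exact (MvPolynomial.support_sum_monomial_coeff q)

set_option maxHeartbeats 1000000 in
lemma forcing_fiber_preconnected (R : Type*) [CommRing R] (n : ℕ) (f : Fin n → R) (f₀ : R)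
    (p : PrimeSpectrum R) (κ : Type*) [Field κ] [Algebra (R ⧸ p.asIdeal) κ]
    [IsFractionRing (R ⧸ p.asIdeal) κ]
    (hne : (PrimeSpectrum.comap (algebraMap R (ForcingAlgebra R n f f₀)) ⁻¹' {p}).Nonempty) :
    IsPreconnected (PrimeSpectrum.comap (algebraMap R (ForcingAlgebra R n f f₀)) ⁻¹' {p}) := by
  classical
  set g : MvPolynomial (Fin n) R := (∑ i : Fin n, C (f i) * X i) + C f₀ with hgdef
  set A := ForcingAlgebra R n f f₀ with hA
  set π : MvPolynomial (Fin n) R →+* A := Ideal.Quotient.mk (Ideal.span {g}) with hπdef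
  have halg : algebraMap R A = π.comp (C : R →+* MvPolynomial (Fin n) R) := rfl
  have hπg : π g = 0 := Ideal.Quotient.eq_zero_iff_mem.mpr (Ideal.subset_span rfl)
  haveI hpp : p.asIdeal.IsPrime := p.2
  haveI : IsDomain (R ⧸ p.asIdeal) := (Ideal.Quotient.isDomain_iff_prime _).mpr hpp
  set ρ : R →+* κ := (algebraMap (R ⧸ p.asIdeal) κ).comp (Ideal.Quotient.mk p.asIdeal) with hρ
  have hker : ∀ r : R, ρ r = 0 ↔ r ∈ p.asIdeal := by
    intro r
    rw [hρ, RingHom.comp_apply, IsFractionRing.to_map_eq_zero_iff,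
      Ideal.Quotient.eq_zero_iff_mem]
  set Φ : MvPolynomial (Fin n) R →+* MvPolynomial (Fin n) κ := MvPolynomial.map ρ with hΦdef
  set G : MvPolynomial (Fin n) κ := Φ g with hG
  have hGform : G = (∑ i : Fin n, C (ρ (f i)) * X i) + C (ρ f₀) := by
    rw [hG, hgdef]
    simp [hΦdef, map_sum, MvPolynomial.map_C, MvPolynomial.map_X]
  -- membership translation
  have hmemcomap : ∀ (x : PrimeSpectrum A),
      PrimeSpectrum.comap (algebraMap R A) x = p →
      ∀ r : R, π (C r) ∈ x.asIdeal ↔ r ∈ p.asIdeal := by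
    intro x hx r
    have hx' : Ideal.comap (algebraMap R A) x.asIdeal = p.asIdeal :=
      congrArg PrimeSpectrum.asIdeal hx
    rw [← hx']
    exact Iff.rfl
  -- the span of G is prime
  have hGprime : (Ideal.span {G}).IsPrime := by
    by_cases hj : ∃ j, f j ∉ p.asIdeal
    · obtain ⟨j, hj⟩ := hj
      have hcj : ρ (f j) ≠ 0 := fun h => hj ((hker _).1 h)
      rw [hGform]
      exact span_linear_isPrime (fun i => ρ (f i)) (ρ f₀) j hcj
    · push_neg at hj
      by_cases hf0 : f₀ ∈ p.asIdeal
      · have hG0 : G = 0 := by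
          rw [hGform]
          have h1 : ∀ i, ρ (f i) = 0 := fun i => (hker _).2 (hj i)
          have h2 : ρ f₀ = 0 := (hker _).2 hf0
          simp [h1, h2]
        rw [hG0, show Ideal.span {(0 : MvPolynomial (Fin n) κ)} = ⊥ by
          rw [Ideal.span_singleton_eq_bot]]
        exact Ideal.bot_prime
      · exfalso
        obtain ⟨x, hx⟩ := hne
        have hx2 : PrimeSpectrum.comap (algebraMap R A) x = p := hx
        have hexp : π g = (∑ i : Fin n, π (C (f i)) * π (X i)) + π (C f₀) := by
          rw [hgdef, map_add, map_sum]
          simp [map_mul]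
        have hsum : (∑ i : Fin n, π (C (f i)) * π (X i)) ∈ x.asIdeal :=
          Ideal.sum_mem _ fun i _ =>
            Ideal.mul_mem_right _ _ ((hmemcomap x hx2 (f i)).mpr (hj i))
        have hCf₀ : π (C f₀) ∈ x.asIdeal := by
          have : π (C f₀) = π g - (∑ i : Fin n, π (C (f i)) * π (X i)) := by
            rw [hexp]; ring
          rw [this, hπg, zero_sub]
          exact neg_mem hsum
        exact hf0 ((hmemcomap x hx2 f₀).mp hCf₀)
  haveI : IsDomain (MvPolynomial (Fin n) κ ⧸ Ideal.span {G}) :=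
    (Ideal.Quotient.isDomain_iff_prime _).mpr hGprime
  have hkill : ∀ a ∈ Ideal.span {g},
      ((Ideal.Quotient.mk (Ideal.span {G})).comp Φ) a = 0 := by
    intro a ha
    obtain ⟨c, rfl⟩ := Ideal.mem_span_singleton'.mp ha
    rw [RingHom.comp_apply, map_mul, Ideal.Quotient.eq_zero_iff_mem]
    exact Ideal.mul_mem_left _ _ (Ideal.subset_span rfl)
  set ψ : A →+* (MvPolynomial (Fin n) κ ⧸ Ideal.span {G}) :=
    Ideal.Quotient.lift (Ideal.span {g}) ((Ideal.Quotient.mk (Ideal.span {G})).comp Φ) hkill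
    with hψdef
  have hψπ : ∀ h : MvPolynomial (Fin n) R,
      ψ (π h) = Ideal.Quotient.mk (Ideal.span {G}) (Φ h) := fun h => rfl
  set x₀ : PrimeSpectrum A := ⟨RingHom.ker ψ, RingHom.ker_isPrime ψ⟩ with hx₀def
  have hx₀ : PrimeSpectrum.comap (algebraMap R A) x₀ = p := by
    refine PrimeSpectrum.ext ?_
    ext r
    show algebraMap R A r ∈ RingHom.ker ψ ↔ r ∈ p.asIdeal
    rw [halg, RingHom.comp_apply, RingHom.mem_ker, hψπ, MvPolynomial.map_C,
      Ideal.Quotient.eq_zero_iff_mem]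
    constructor
    · intro hr
      by_contra hrp
      have hρr : ρ r ≠ 0 := fun h => hrp ((hker _).1 h)
      have hunit : IsUnit (C (ρ r) : MvPolynomial (Fin n) κ) :=
        (IsUnit.mk0 _ hρr).map (C : κ →+* MvPolynomial (Fin n) κ)
      exact hGprime.ne_top (Ideal.eq_top_of_isUnit_mem _ hr hunit)
    · intro hr
      rw [(hker r).2 hr]
      simp
  have hle : ∀ x : PrimeSpectrum A,
      PrimeSpectrum.comap (algebraMap R A) x = p → x₀.asIdeal ≤ x.asIdeal := by
    intro x hx a ha
    have hxp : Ideal.comap (algebraMap R A) x.asIdeal = p.asIdeal :=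
      congrArg PrimeSpectrum.asIdeal hx
    obtain ⟨h, rfl⟩ := Ideal.Quotient.mk_surjective a
    have hΦh : Φ h ∈ Ideal.span {G} := by
      have := (RingHom.mem_ker (f := ψ)).mp ha
      rw [hψπ, Ideal.Quotient.eq_zero_iff_mem] at this
      exact this
    obtain ⟨v, hv⟩ := Ideal.mem_span_singleton'.mp hΦh
    obtain ⟨b, hb⟩ := IsLocalization.exist_integer_multiples
      (nonZeroDivisors (R ⧸ p.asIdeal)) v.support v.coeff
    set t : R ⧸ p.asIdeal := (b : R ⧸ p.asIdeal) with ht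
    have hcoeff : ∀ m, ∃ y : R ⧸ p.asIdeal,
        algebraMap (R ⧸ p.asIdeal) κ y = (MvPolynomial.C (algebraMap (R ⧸ p.asIdeal) κ t) * v).coeff m := by
      intro m
      rw [MvPolynomial.coeff_C_mul]
      by_cases hm : m ∈ v.support
      · obtain ⟨y, hy⟩ := hb m hm
        exact ⟨y, by rw [hy, Algebra.smul_def]⟩
      · exact ⟨0, by rw [MvPolynomial.notMem_support_iff.mp hm]; simp⟩
    obtain ⟨w, hw⟩ := exists_map_eq (algebraMap (R ⧸ p.asIdeal) κ) _ hcoeff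
    have hfac : ∀ q : MvPolynomial (Fin n) R, Φ q =
        MvPolynomial.map (algebraMap (R ⧸ p.asIdeal) κ)
          (MvPolynomial.map (Ideal.Quotient.mk p.asIdeal) q) := by
      intro q
      rw [MvPolynomial.map_map]
    have hkey : MvPolynomial.C t * MvPolynomial.map (Ideal.Quotient.mk p.asIdeal) h
        = w * MvPolynomial.map (Ideal.Quotient.mk p.asIdeal) g := by
      apply MvPolynomial.map_injective (algebraMap (R ⧸ p.asIdeal) κ) (IsFractionRing.injective (R ⧸ p.asIdeal) κ)
      rw [map_mul, map_mul, hw, MvPolynomial.map_C, ← hfac, ← hfac, ← hv]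
      ring
    obtain ⟨t', ht'⟩ := Ideal.Quotient.mk_surjective t
    obtain ⟨w', hw'⟩ := MvPolynomial.map_surjective
      (Ideal.Quotient.mk p.asIdeal) Ideal.Quotient.mk_surjective w
    have hmem : MvPolynomial.C t' * h - w' * g ∈
        Ideal.map (C : R →+* MvPolynomial (Fin n) R) p.asIdeal := by
      rw [show Ideal.map (C : R →+* MvPolynomial (Fin n) R) p.asIdeal
          = Ideal.map C (RingHom.ker (Ideal.Quotient.mk p.asIdeal)) by rw [Ideal.mk_ker],
        ← MvPolynomial.ker_map, RingHom.mem_ker, map_sub, map_mul, map_mul,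
        MvPolynomial.map_C, ht', hw', hkey, sub_self]
    have hmap2 : Ideal.map π (Ideal.map (C : R →+* MvPolynomial (Fin n) R) p.asIdeal)
        = Ideal.map (algebraMap R A) p.asIdeal := by
      rw [Ideal.map_map, halg]
    have h3 : Ideal.map (algebraMap R A) p.asIdeal ≤ x.asIdeal :=
      Ideal.map_le_iff_le_comap.mpr (le_of_eq hxp.symm)
    have hπmem : π (C t') * π h ∈ x.asIdeal := by
      have h1 : π (MvPolynomial.C t' * h) = π (MvPolynomial.C t' * h - w' * g) := by
        rw [map_sub, map_mul π w' g, hπg, mul_zero, sub_zero]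
      have h2 : π (MvPolynomial.C t' * h) ∈ Ideal.map (algebraMap R A) p.asIdeal := by
        rw [h1, ← hmap2]
        exact Ideal.mem_map_of_mem _ hmem
      rw [← map_mul]
      exact h3 h2
    have ht'p : t' ∉ p.asIdeal := by
      intro hmem'
      have ht0 : t = 0 := by rw [← ht', Ideal.Quotient.eq_zero_iff_mem]; exact hmem'
      exact nonZeroDivisors.ne_zero b.2 ht0
    rcases x.2.mem_or_mem hπmem with hc | hc
    · exact absurd ((hmemcomap x hx t').mp hc) ht'p
    · exact hc
  -- topology wrap-up
  have hx₀mem : x₀ ∈ PrimeSpectrum.comap (algebraMap R A) ⁻¹' {p} := hx₀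
  have hclos : ∀ x, x ∈ PrimeSpectrum.comap (algebraMap R A) ⁻¹' {p} →
      x ∈ closure {x₀} := fun x hx =>
    specializes_iff_mem_closure.mp ((PrimeSpectrum.le_iff_specializes x₀ x).mp (hle x hx))
  rintro u v hu hv hcov ⟨a, haS, hau⟩ ⟨b', hbS, hbv⟩
  have hx₀u : x₀ ∈ u := by
    obtain ⟨z, hzu, hz⟩ := mem_closure_iff.mp (hclos a haS) u hu hau
    rwa [Set.mem_singleton_iff.mp hz] at hzu
  have hx₀v : x₀ ∈ v := by
    obtain ⟨z, hzv, hz⟩ := mem_closure_iff.mp (hclos b' hbS) v hv hbv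
    rwa [Set.mem_singleton_iff.mp hz] at hzv
  exact ⟨x₀, hx₀mem, hx₀u, hx₀v⟩

/-- Let `A = R[T_1,…,T_n]/(f_1T_1+⋯+f_nT_n+f₀)` be a forcing algebra with
forcing morphism `φ : Spec A → Spec R`. If `φ` is a submersion (surjective, and `T` is
open iff `φ⁻¹(T)` is open), then the connected components of `Spec A` are exactly the
preimages `φ⁻¹(Z)` of the connected components `Z` of `Spec R`; in particular `Spec A` is
connected iff `Spec R` is connected. -/
theorem forcing_algebra_submersion_connected_components
    (R : Type*) [CommRing R] (n : ℕ) (f : Fin n → R) (f₀ : R)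
    (hsurj : Function.Surjective
      (PrimeSpectrum.comap (algebraMap R (ForcingAlgebra R n f f₀))))
    (hsubm : ∀ T : Set (PrimeSpectrum R), IsOpen T ↔
      IsOpen (PrimeSpectrum.comap (algebraMap R (ForcingAlgebra R n f f₀)) ⁻¹' T)) :
    (∀ C : Set (PrimeSpectrum (ForcingAlgebra R n f f₀)),
      IsConnectedComponent C ↔
        ∃ Z : Set (PrimeSpectrum R), IsConnectedComponent Z ∧
          C = PrimeSpectrum.comap (algebraMap R (ForcingAlgebra R n f f₀)) ⁻¹' Z) ∧
    (ConnectedSpace (PrimeSpectrum (ForcingAlgebra R n f f₀)) ↔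
      ConnectedSpace (PrimeSpectrum R)) := by
  set φ : PrimeSpectrum (ForcingAlgebra R n f f₀) → PrimeSpectrum R :=
    (PrimeSpectrum.comap (algebraMap R (ForcingAlgebra R n f f₀))) with hφ
  have hcont : Continuous φ :=
    PrimeSpectrum.continuous_comap (algebraMap R (ForcingAlgebra R n f f₀))
  have hfib : ∀ p : PrimeSpectrum R, IsPreconnected (φ ⁻¹' {p}) := by
    intro p
    haveI : p.asIdeal.IsPrime := p.2
    haveI : IsDomain (R ⧸ p.asIdeal) := (Ideal.Quotient.isDomain_iff_prime _).mpr p.2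
    obtain ⟨x, hx⟩ := hsurj p
    exact forcing_fiber_preconnected R n f f₀ p (FractionRing (R ⧸ p.asIdeal)) ⟨x, hx⟩
  have key : ∀ a : PrimeSpectrum (ForcingAlgebra R n f f₀),
      connectedComponent a = φ ⁻¹' (connectedComponent (φ a)) := by
    intro a
    apply Set.Subset.antisymm
    · have h1 : φ '' connectedComponent a ⊆ connectedComponent (φ a) :=
        IsPreconnected.subset_connectedComponent
          (isPreconnected_connectedComponent.image φ hcont.continuousOn)
          ⟨a, mem_connectedComponent, rfl⟩
      intro y hy
      exact h1 ⟨y, hy, rfl⟩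
    · exact IsPreconnected.subset_connectedComponent
        (preimage_preconnected_of_quotient φ hsurj hsubm hfib
          isClosed_connectedComponent isPreconnected_connectedComponent)
        mem_connectedComponent
  constructor
  · intro C
    constructor
    · rintro ⟨a, rfl⟩
      exact ⟨connectedComponent (φ a), ⟨φ a, rfl⟩, key a⟩
    · rintro ⟨Z, ⟨z, rfl⟩, rfl⟩
      obtain ⟨a, ha⟩ := hsurj z
      exact ⟨a, by rw [key a, ha]⟩
  · constructor
    · intro hA
      rw [connectedSpace_iff_univ] at hA ⊢
      obtain ⟨⟨a, -⟩, hA2⟩ := hA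
      refine ⟨⟨φ a, trivial⟩, ?_⟩
      have := hA2.image φ hcont.continuousOn
      rwa [Set.image_univ, hsurj.range_eq] at this
    · intro hR
      rw [connectedSpace_iff_univ] at hR ⊢
      obtain ⟨⟨x, -⟩, hR2⟩ := hR
      obtain ⟨a, -⟩ := hsurj x
      refine ⟨⟨a, trivial⟩, ?_⟩
      have := preimage_preconnected_of_quotient φ hsurj hsubm hfib isClosed_univ hR2
      rwa [Set.preimage_univ] at this
end

section
/- Let R be a noetherian integral domain, let f_1,…,f_n, f ∈ R with (f_1,…,f_n) ≠ 0, set B = R[T_1,…,T_n], h = f_1T_1+⋯+f_nT_n+f, and let 𝔭 = B ∩ (h)Q(R)[T_1,…,T_n] be the horizontal prime. Then every minimal prime ideal over (h) in B different from 𝔭 is of the form 𝔮B (the extension to B) for some prime ideal 𝔮 ⊆ R that is a minimal prime over the ideal (f_1,…,f_n,f) of R. -/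
open MvPolynomial

/-- The forcing equation `h = f_1T_1+⋯+f_nT_n+f₀` in `B = R[T_1,…,T_n]`. -/
noncomputable abbrev forcingPoly (R : Type*) [CommRing R] (n : ℕ) (f : Fin n → R) (f₀ : R) :
    MvPolynomial (Fin n) R :=
  (∑ i : Fin n, C (f i) * X i) + C f₀

/-- The horizontal prime `𝔭 = B ∩ (h)·Q(R)[T_1,…,T_n]`, i.e. the contraction to
`B = R[T_1,…,T_n]` of the ideal generated by `h` in `Q(R)[T_1,…,T_n]`. -/
noncomputable abbrev horizontalPrime (R : Type*) [CommRing R] [IsDomain R]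
    (n : ℕ) (f : Fin n → R) (f₀ : R) : Ideal (MvPolynomial (Fin n) R) :=
  Ideal.comap (MvPolynomial.map (algebraMap R (FractionRing R)))
    (Ideal.span {MvPolynomial.map (algebraMap R (FractionRing R)) (forcingPoly R n f f₀)})

namespace ForcingAux

/-- `X i` is prime in a multivariate polynomial ring over a domain. -/
lemma prime_X_fin {A : Type*} [CommRing A] [IsDomain A] {n : ℕ} (i : Fin n) :
    Prime (X i : MvPolynomial (Fin n) A) := by
  obtain ⟨m, rfl⟩ : ∃ m, n = m + 1 := ⟨n - 1, (Nat.succ_pred_eq_of_pos i.pos).symm⟩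
  let e : MvPolynomial (Fin (m + 1)) A ≃ₐ[A] Polynomial (MvPolynomial (Fin m) A) :=
    (renameEquiv A (Equiv.swap i 0)).trans (finSuccEquiv A m)
  have he : e (X i) = Polynomial.X := by
    show (finSuccEquiv A m) ((renameEquiv A (Equiv.swap i 0)) (X i)) = Polynomial.X
    rw [renameEquiv_apply, rename_X, Equiv.swap_apply_left, finSuccEquiv_X_zero]
  have := (MulEquiv.prime_iff e.toRingEquiv.toMulEquiv (p := (X i : MvPolynomial (Fin (m+1)) A)))
  rw [← this]
  have : e.toRingEquiv.toMulEquiv (X i) = Polynomial.X := he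
  rw [this]
  exact Polynomial.prime_X

lemma X_dvd_iff_coeff {A : Type*} [CommRing A] {n : ℕ} (i : Fin n)
    (p : MvPolynomial (Fin n) A) :
    (X i : MvPolynomial (Fin n) A) ∣ p ↔ ∀ m : Fin n →₀ ℕ, m i = 0 → coeff m p = 0 := by
  rw [← Ideal.mem_span_singleton]
  have : ({X i} : Set (MvPolynomial (Fin n) A)) = X '' ({i} : Set (Fin n)) := by simp
  rw [this, mem_ideal_span_X_image]
  constructor
  · intro H m hm
    by_contra hc
    obtain ⟨j, hj, hji⟩ := H m (mem_support_iff.mpr hc)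
    rcases hj with rfl
    exact hji hm
  · intro H m hm
    refine ⟨i, rfl, ?_⟩
    intro hmi
    exact mem_support_iff.mp hm (H m hmi)

variable {n : ℕ} {A : Type*} [CommRing A] (c : Fin n → A) (d : A) (i : Fin n) (v : A)

/-- The part of the forcing polynomial not involving `X i`. -/
noncomputable def g0 : MvPolynomial (Fin n) A :=
  (∑ j ∈ Finset.univ.erase i, C (c j) * X j) + C d

lemma hA_eq : forcingPoly A n c d = C (c i) * X i + g0 c d i := by
  unfold g0
  show (∑ j : Fin n, C (c j) * X j) + C d = _
  rw [show (∑ j : Fin n, C (c j) * X j) =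
    (∑ j ∈ Finset.univ.erase i, C (c j) * X j) + C (c i) * X i from
      (Finset.sum_erase_add _ _ (Finset.mem_univ i)).symm]
  ring

/-- The substitution sending `X i` to `v • (X i - g0)`. -/
noncomputable def fwd : MvPolynomial (Fin n) A →ₐ[A] MvPolynomial (Fin n) A :=
  aeval (fun j => if j = i then C v * (X i - g0 c d i) else X j)

noncomputable def bwd : MvPolynomial (Fin n) A →ₐ[A] MvPolynomial (Fin n) A :=
  aeval (fun j => if j = i then C (c i) * X i + g0 c d i else X j)

lemma aeval_g0_fix (ζ : Fin n → MvPolynomial (Fin n) A) (hζ : ∀ j, j ≠ i → ζ j = X j) :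
    aeval ζ (g0 c d i) = g0 c d i := by
  unfold g0
  rw [map_add, map_sum]
  congr 1
  · refine Finset.sum_congr rfl fun j hj => ?_
    rw [map_mul, aeval_C, aeval_X, hζ j (Finset.ne_of_mem_erase hj), algebraMap_eq]
  · rw [aeval_C, algebraMap_eq]

lemma fwd_g0 : fwd c d i v (g0 c d i) = g0 c d i :=
  aeval_g0_fix c d i _ (fun j hj => if_neg hj)

lemma bwd_g0 : bwd c d i (g0 c d i) = g0 c d i :=
  aeval_g0_fix c d i _ (fun j hj => if_neg hj)

lemma fwd_X : fwd c d i v (X i) = C v * (X i - g0 c d i) := by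
  simp [fwd]

lemma bwd_X : bwd c d i (X i) = C (c i) * X i + g0 c d i := by
  simp [bwd]

lemma fwd_X' (j : Fin n) (hj : j ≠ i) : fwd c d i v (X j) = X j := by
  simp [fwd, hj]

lemma bwd_X' (j : Fin n) (hj : j ≠ i) : bwd c d i (X j) = X j := by
  simp [bwd, hj]

variable (hv : v * c i = 1)

include hv in
lemma fwd_bwd : (fwd c d i v).comp (bwd c d i) = AlgHom.id A _ := by
  apply algHom_ext
  intro j
  by_cases hj : j = i
  · subst hj
    rw [AlgHom.comp_apply, bwd_X, map_add, map_mul, fwd_X, fwd_g0]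
    have : (fwd c d j v) (C (c j)) = C (c j) := by
      rw [← algebraMap_eq, AlgHom.commutes]
    rw [this, ← mul_assoc, ← C_mul, mul_comm (c j) v, hv, C_1, one_mul, sub_add_cancel,
      AlgHom.id_apply]
  · rw [AlgHom.comp_apply, bwd_X' c d i j hj, fwd_X' c d i v j hj, AlgHom.id_apply]

include hv in
lemma bwd_fwd : (bwd c d i).comp (fwd c d i v) = AlgHom.id A _ := by
  apply algHom_ext
  intro j
  by_cases hj : j = i
  · subst hj
    rw [AlgHom.comp_apply, fwd_X, map_mul, map_sub, bwd_X, bwd_g0]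
    have : (bwd c d j) (C v) = C v := by
      rw [← algebraMap_eq, AlgHom.commutes]
    rw [this, add_sub_cancel_right, ← mul_assoc, ← C_mul, hv, C_1, one_mul, AlgHom.id_apply]
  · rw [AlgHom.comp_apply, fwd_X' c d i v j hj, bwd_X' c d i j hj, AlgHom.id_apply]

/-- The algebra automorphism carrying the forcing polynomial to `X i`. -/
noncomputable def forcEquiv : MvPolynomial (Fin n) A ≃ₐ[A] MvPolynomial (Fin n) A :=
  AlgEquiv.ofAlgHom (fwd c d i v) (bwd c d i) (fwd_bwd c d i v hv) (bwd_fwd c d i v hv)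

lemma forcEquiv_apply (p : MvPolynomial (Fin n) A) : forcEquiv c d i v hv p = fwd c d i v p :=
  rfl

lemma forcEquiv_hA : forcEquiv c d i v hv (forcingPoly A n c d) = X i := by
  rw [forcEquiv_apply, hA_eq c d i, map_add, map_mul, fwd_X, fwd_g0]
  have : (fwd c d i v) (C (c i)) = C (c i) := by
    rw [← algebraMap_eq, AlgHom.commutes]
  rw [this, ← mul_assoc, ← C_mul, mul_comm (c i) v, hv, C_1, one_mul, sub_add_cancel]

include hv in
lemma mem_span_iff (p : MvPolynomial (Fin n) A) :
    p ∈ Ideal.span {forcingPoly A n c d} ↔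
      ∀ m : Fin n →₀ ℕ, m i = 0 → coeff m (fwd c d i v p) = 0 := by
  rw [Ideal.mem_span_singleton, ← X_dvd_iff_coeff i (fwd c d i v p)]
  set e := forcEquiv c d i v hv with he
  constructor
  · intro hdvd
    have := map_dvd (forcEquiv c d i v hv) hdvd
    rwa [forcEquiv_hA c d i v hv, forcEquiv_apply] at this
  · intro hdvd
    have := map_dvd (e.symm : MvPolynomial (Fin n) A →* MvPolynomial (Fin n) A) hdvd
    have h1 : e.symm (X i) = forcingPoly A n c d := by
      rw [← forcEquiv_hA c d i v hv]
      exact e.symm_apply_apply _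
    have h2 : e.symm (fwd c d i v p) = p := by
      rw [← forcEquiv_apply c d i v hv]
      exact e.symm_apply_apply _
    simpa [h1, h2] using this

include hv in
lemma span_prime [IsDomain A] : (Ideal.span {forcingPoly A n c d}).IsPrime := by
  have hne : forcingPoly A n c d ≠ 0 := by
    intro h0
    have := forcEquiv_hA c d i v hv
    rw [h0, map_zero] at this
    exact X_ne_zero i this.symm
  rw [Ideal.span_singleton_prime hne]
  set e := forcEquiv c d i v hv
  rw [← MulEquiv.prime_iff e.toRingEquiv.toMulEquiv]
  have : e.toRingEquiv.toMulEquiv (forcingPoly A n c d) = X i := forcEquiv_hA c d i v hv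
  rw [this]
  exact prime_X_fin i

lemma fwd_natural {A₂ : Type*} [CommRing A₂] (φ : A →+* A₂) (p : MvPolynomial (Fin n) A) :
    map φ (fwd c d i v p) = fwd (fun j => φ (c j)) (φ d) i (φ v) (map φ p) := by
  have : (map φ).comp (fwd c d i v).toRingHom =
      ((fwd (fun j => φ (c j)) (φ d) i (φ v)).toRingHom).comp (map φ) := by
    apply ringHom_ext
    · intro a
      simp only [RingHom.comp_apply, AlgHom.toRingHom_eq_coe, RingHom.coe_coe]
      rw [show (fwd c d i v) (C a) = C a by rw [← algebraMap_eq, AlgHom.commutes], map_C,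
        show (fwd (fun j => φ (c j)) (φ d) i (φ v)) (C (φ a)) = C (φ a) by
          rw [← algebraMap_eq, AlgHom.commutes]]
    · intro j
      simp only [RingHom.comp_apply, AlgHom.toRingHom_eq_coe, RingHom.coe_coe, map_X]
      by_cases hj : j = i
      · subst hj
        rw [fwd_X, fwd_X]
        have hg : map φ (g0 c d j) = g0 (fun k => φ (c k)) (φ d) j := by
          unfold g0
          rw [map_add, map_sum, map_C]
          congr 1
          refine Finset.sum_congr rfl fun k _ => ?_
          rw [map_mul, map_C, map_X]
        rw [map_mul, map_sub, map_C, map_X, hg]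
      · rw [fwd_X' c d i v j hj, fwd_X' _ _ i _ j hj, map_X]
  exact congrFun (congrArg DFunLike.coe this) p

end ForcingAux

open ForcingAux in
/-- For a noetherian domain `R` and a forcing equation
`h = f_1T_1+⋯+f_nT_n+f₀` with `(f_1,…,f_n) ≠ 0`, every minimal prime over `(h)` in
`B = R[T_1,…,T_n]` different from the horizontal prime `𝔭` is the extension `𝔮B` of a
prime ideal `𝔮 ⊆ R` minimal over `(f_1,…,f_n,f₀)`. -/
theorem vertical_minimal_primes_are_extended
    (R : Type*) [CommRing R] [IsDomain R] [IsNoetherianRing R]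
    (n : ℕ) (f : Fin n → R) (f₀ : R) (hf : ∃ i, f i ≠ 0) :
    ∀ P ∈ (Ideal.span {forcingPoly R n f f₀}).minimalPrimes,
      P ≠ horizontalPrime R n f f₀ →
        ∃ q ∈ (Ideal.span (insert f₀ (Set.range f))).minimalPrimes,
          P = Ideal.map (C : R →+* MvPolynomial (Fin n) R) q := by
  intro P hP hne
  classical
  set h : MvPolynomial (Fin n) R := forcingPoly R n f f₀ with hh
  have hPprime : P.IsPrime := hP.1.1
  have hhP : h ∈ P := hP.1.2 (Ideal.subset_span rfl)
  by_cases hcase : ∀ j, C (f j) ∈ P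
  · -- vertical case: all coefficients are in P
    set q : Ideal R := Ideal.comap (C : R →+* MvPolynomial (Fin n) R) P with hq
    have hqprime : q.IsPrime := Ideal.IsPrime.comap _
    have hfq : ∀ j, f j ∈ q := fun j => hcase j
    have hCf₀ : C f₀ ∈ P := by
      have : C f₀ = h - ∑ j : Fin n, C (f j) * X j := by rw [hh]; ring
      rw [this]
      exact Ideal.sub_mem _ hhP (Ideal.sum_mem _ fun j _ => Ideal.mul_mem_right _ _ (hcase j))
    have hf₀q : f₀ ∈ q := hCf₀
    -- for any prime q' of R containing all data, map C q' is prime and contains h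
    have key : ∀ q' : Ideal R, q'.IsPrime → (∀ j, f j ∈ q') → f₀ ∈ q' →
        (Ideal.map (C : R →+* MvPolynomial (Fin n) R) q').IsPrime ∧
          h ∈ Ideal.map (C : R →+* MvPolynomial (Fin n) R) q' := by
      intro q' hq' hfq' hf₀q'
      constructor
      · rw [← Ideal.Quotient.isDomain_iff_prime]
        haveI : IsDomain (R ⧸ q') := (Ideal.Quotient.isDomain_iff_prime q').mpr hq'
        exact MulEquiv.isDomain (MvPolynomial (Fin n) (R ⧸ q'))
          (MvPolynomial.quotientEquivQuotientMvPolynomial q').symm.toRingEquiv.toMulEquiv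
      · rw [hh]
        refine Ideal.add_mem _ (Ideal.sum_mem _ fun j _ =>
          Ideal.mul_mem_right _ _ (Ideal.mem_map_of_mem _ (hfq' j)))
          (Ideal.mem_map_of_mem _ hf₀q')
    have hPeq : P = Ideal.map (C : R →+* MvPolynomial (Fin n) R) q := by
      obtain ⟨hprime, hmem⟩ := key q hqprime hfq hf₀q
      have hle : Ideal.map (C : R →+* MvPolynomial (Fin n) R) q ≤ P :=
        Ideal.map_le_iff_le_comap.mpr le_rfl
      have := hP.2 ⟨hprime, by rwa [Ideal.span_le, Set.singleton_subset_iff]⟩ hle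
      exact le_antisymm this hle
    refine ⟨q, ⟨⟨hqprime, ?_⟩, ?_⟩, hPeq⟩
    · rw [Ideal.span_le]
      rintro x (rfl | ⟨j, rfl⟩)
      · exact hf₀q
      · exact hfq j
    · rintro q' ⟨hq'prime, hq'le⟩ hq'q
      have hfq' : ∀ j, f j ∈ q' := fun j =>
        hq'le (Ideal.subset_span (Set.mem_insert_of_mem _ (Set.mem_range_self j)))
      have hf₀q' : f₀ ∈ q' := hq'le (Ideal.subset_span (Set.mem_insert _ _))
      obtain ⟨hprime', hmem'⟩ := key q' hq'prime hfq' hf₀q'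
      have hle' : Ideal.map (C : R →+* MvPolynomial (Fin n) R) q' ≤ P := by
        rw [hPeq]
        exact Ideal.map_mono hq'q
      have hPle : P ≤ Ideal.map (C : R →+* MvPolynomial (Fin n) R) q' :=
        hP.2 ⟨hprime', by rwa [Ideal.span_le, Set.singleton_subset_iff]⟩ hle'
      intro r hr
      have : C r ∈ Ideal.map (C : R →+* MvPolynomial (Fin n) R) q' :=
        hPle (hr : C r ∈ P)
      have := MvPolynomial.mem_map_C_iff.mp this 0
      rwa [coeff_zero_C] at this
  · -- horizontal case: some coefficient is not in P; derive P = 𝔭, a contradiction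
    exfalso
    push_neg at hcase
    obtain ⟨i, hPi⟩ := hcase
    have hfi : f i ≠ 0 := by
      intro h0
      exact hPi (by rw [h0, map_zero]; exact P.zero_mem)
    set K := FractionRing R
    set M : Submonoid R := Submonoid.powers (f i) with hM
    have hMle : M ≤ nonZeroDivisors R := powers_le_nonZeroDivisors_of_noZeroDivisors hfi
    set R' := Localization M
    letI : Algebra (MvPolynomial (Fin n) R) (MvPolynomial (Fin n) R') :=
      MvPolynomial.algebraMvPolynomial
    haveI : IsDomain R' := IsLocalization.isDomain_localization hMle
    have hinjR' : Function.Injective (algebraMap R R') := IsLocalization.injective R' hMle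
    have hu : IsUnit (algebraMap R R' (f i)) :=
      IsLocalization.map_units R' ⟨f i, Submonoid.mem_powers _⟩
    set v : R' := ↑hu.unit⁻¹ with hvdef
    have hv : v * algebraMap R R' (f i) = 1 := hu.val_inv_mul
    set c' : Fin n → R' := fun j => algebraMap R R' (f j) with hc'
    set d' : R' := algebraMap R R' f₀ with hd'
    set ι : MvPolynomial (Fin n) R →+* MvPolynomial (Fin n) R' :=
      MvPolynomial.map (algebraMap R R') with hι
    have hιalg : algebraMap (MvPolynomial (Fin n) R) (MvPolynomial (Fin n) R') = ι := rfl
    have hinjι : Function.Injective ι := MvPolynomial.map_injective _ hinjR'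
    have hιh : ι h = forcingPoly R' n c' d' := by
      rw [hh]
      simp [forcingPoly, c', d', map_sum, hι, MvPolynomial.map_C, MvPolynomial.map_X]
    -- the map from R' to K
    have hunits : ∀ y : M, IsUnit (algebraMap R K y) :=
      fun y => IsLocalization.map_units K ⟨(y : R), hMle y.2⟩
    set ψ : R' →+* K := IsLocalization.lift hunits with hψ
    have hψcomp : ∀ r : R, ψ (algebraMap R R' r) = algebraMap R K r := fun r =>
      IsLocalization.lift_eq hunits r
    have hψinj : Function.Injective ψ := by
      rw [injective_iff_map_eq_zero]
      intro x hx
      obtain ⟨⟨r, s⟩, hrs⟩ := IsLocalization.surj M x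
      have : ψ (x * algebraMap R R' s) = ψ (algebraMap R R' r) := by rw [hrs]
      rw [map_mul, hx, zero_mul, hψcomp] at this
      have hr : r = 0 := by
        apply IsFractionRing.injective R K
        rw [← this, map_zero]
      rw [hr, map_zero] at hrs
      have hsu : IsUnit (algebraMap R R' (s : R)) := IsLocalization.map_units R' s
      exact (hsu.mul_left_eq_zero).mp hrs
    set μ : MvPolynomial (Fin n) R →+* MvPolynomial (Fin n) K :=
      MvPolynomial.map (algebraMap R K) with hμ
    set θ : MvPolynomial (Fin n) R' →+* MvPolynomial (Fin n) K :=
      MvPolynomial.map ψ with hθ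
    have hθι : ∀ p, θ (ι p) = μ p := by
      intro p
      have hcomp : ψ.comp (algebraMap R R') = algebraMap R K := RingHom.ext hψcomp
      rw [hθ, hι, hμ, MvPolynomial.map_map, hcomp]
    -- data over K
    set cK : Fin n → K := fun j => algebraMap R K (f j) with hcK
    set dK : K := algebraMap R K f₀ with hdK
    set vK : K := ψ v with hvK
    have hvKunit : vK * cK i = 1 := by
      show ψ v * algebraMap R K (f i) = 1
      rw [← hψcomp (f i), ← map_mul, hv, map_one]
    have hμh : μ h = forcingPoly K n cK dK := by
      rw [hh]
      simp [forcingPoly, cK, dK, map_sum, hμ, MvPolynomial.map_C, MvPolynomial.map_X]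
    have hcKψ : cK = fun j => ψ (c' j) := by
      funext j
      rw [hcK, hc', hψcomp]
    have hdKψ : dK = ψ d' := by rw [hdK, hd', hψcomp]
    have hvKψ : vK = ψ v := rfl
    -- Claim 2: contraction of (ι h) along ι equals the horizontal prime
    have hcontr : ∀ p : MvPolynomial (Fin n) R',
        p ∈ Ideal.span {ι h} ↔ θ p ∈ Ideal.span {μ h} := by
      intro p
      constructor
      · intro hp
        rw [Ideal.mem_span_singleton] at hp ⊢
        rw [← hθι h]
        exact map_dvd θ hp
      · intro hp
        rw [hιh, mem_span_iff c' d' i v hv]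
        rw [hμh, mem_span_iff cK dK i vK hvKunit] at hp
        intro m hm
        have := hp m hm
        rw [hcKψ, hdKψ, hvKψ, ← fwd_natural c' d' i v ψ p] at this
        rw [MvPolynomial.coeff_map] at this
        exact hψinj (by rw [this, map_zero])
    -- Claim 1: P equals the contraction of (ι h)
    have hsprime : (Ideal.span {ι h}).IsPrime := by
      rw [hιh]
      exact span_prime c' d' i v hv
    have hcomap_prime : (Ideal.comap ι (Ideal.span {ι h})).IsPrime :=
      Ideal.IsPrime.comap _
    have hhmem : h ∈ Ideal.comap ι (Ideal.span {ι h}) :=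
      Ideal.subset_span rfl
    have hcomap_le : Ideal.comap ι (Ideal.span {ι h}) ≤ P := by
      intro b hb
      have hb' : ι b ∈ Ideal.map ι (Ideal.span {h}) := by
        rw [Ideal.map_span, Set.image_singleton]
        exact hb
      rw [← hιalg, IsLocalization.mem_map_algebraMap_iff (M.map (C : R →+* MvPolynomial (Fin n) R))
        (MvPolynomial (Fin n) R')] at hb'
      obtain ⟨⟨x, s⟩, hx⟩ := hb'
      rw [hιalg] at hx
      have : b * (s : MvPolynomial (Fin n) R) = (x : MvPolynomial (Fin n) R) := by
        apply hinjι
        rw [map_mul]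
        exact hx
      have hmem : b * (s : MvPolynomial (Fin n) R) ∈ P := by
        rw [this]
        exact hP.1.2 x.2
      rcases hPprime.mem_or_mem hmem with hbP | hsP
      · exact hbP
      · exfalso
        obtain ⟨t, htM, hts⟩ := s.2
        obtain ⟨k, hk⟩ := htM
        rw [← hts, ← hk, map_pow] at hsP
        exact hPi (hPprime.mem_of_pow_mem k hsP)
    have hPeq1 : P = Ideal.comap ι (Ideal.span {ι h}) := by
      have hle : Ideal.span {h} ≤ Ideal.comap ι (Ideal.span {ι h}) := by
        rw [Ideal.span_le, Set.singleton_subset_iff]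
        exact hhmem
      exact le_antisymm (hP.2 ⟨hcomap_prime, hle⟩ hcomap_le) hcomap_le
    -- now conclude P = horizontal prime
    apply hne
    rw [hPeq1]
    ext b
    simp only [Ideal.mem_comap]
    rw [hcontr, hθι]
end

section
/- Let R be a noetherian integral domain, let f_1,…,f_n, f ∈ R with (f_1,…,f_n) ≠ 0, set B = R[T_1,…,T_n], h = f_1T_1+⋯+f_nT_n+f, and let 𝔭 = B ∩ (h)Q(R)[T_1,…,T_n] be the horizontal prime. For a prime ideal 𝔮 ⊆ R that is a minimal prime over (f_1,…,f_n,f), the extended ideal 𝔮B is a minimal prime over (h) in B if and only if there exists a polynomial G ∈ 𝔭 with G ∉ 𝔮B, i.e. if and only if 𝔭 is not contained in 𝔮B. -/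
open MvPolynomial

theorem map_C_isPrime (R : Type*) [CommRing R] (n : ℕ) (q : Ideal R) (hq : q.IsPrime) :
    (Ideal.map (C : R →+* MvPolynomial (Fin n) R) q).IsPrime := by
  rw [← Ideal.Quotient.isDomain_iff_prime]
  exact MulEquiv.isDomain (MvPolynomial (Fin n) (R ⧸ q))
    (MvPolynomial.quotientEquivQuotientMvPolynomial (σ := Fin n) q).symm.toMulEquiv

theorem key_pow (R K : Type*) [CommRing R] [CommRing K] (n : ℕ) (g : R →+* K)
    (f : Fin n → R) (f₀ : R) (u : MvPolynomial (Fin n) K)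
    (hu : ∀ μ, coeff μ (MvPolynomial.map g (forcingPoly R n f f₀) * u) ∈ g.range)
    (i : Fin n) :
    ∃ m : ℕ, ∀ μ, g (f i) ^ m * coeff μ u ∈ g.range := by
  classical
  have expand : ∀ ν, coeff ν (MvPolynomial.map g (forcingPoly R n f f₀) * u)
      = (∑ j, g (f j) * coeff ν (X j * u)) + g f₀ * coeff ν u := by
    intro ν
    have hH : MvPolynomial.map g (forcingPoly R n f f₀)
        = (∑ j, C (g (f j)) * X j) + C (g f₀) := by
      simp [forcingPoly]
    rw [hH, add_mul, Finset.sum_mul, coeff_add, coeff_C_mul]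
    congr 1
    rw [coeff_sum]
    refine Finset.sum_congr rfl fun j _ => ?_
    rw [mul_assoc, coeff_C_mul]
  have main : ∀ t : ℕ, ∀ μ : Fin n →₀ ℕ, u.degreeOf i < μ i + t →
      g (f i) ^ t * coeff μ u ∈ g.range := by
    intro t
    induction t with
    | zero =>
      intro μ hμ
      have h0 : coeff μ u = 0 := by
        by_contra hc
        have := degreeOf_le_iff.mp (le_refl (u.degreeOf i)) μ (mem_support_iff.mpr hc)
        omega
      rw [h0, mul_zero]; exact ⟨0, map_zero g⟩
    | succ t ih =>
      intro μ hμ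
      set ν : Fin n →₀ ℕ := μ + Finsupp.single i 1 with hν
      have hνi : ν i = μ i + 1 := by simp [hν]
      have hXi : coeff ν (X i * u) = coeff μ u := by
        rw [hν, add_comm μ, coeff_X_mul]
      have hstep : g (f i) ^ (t+1) * coeff μ u
          = g (f i) ^ t * coeff ν (MvPolynomial.map g (forcingPoly R n f f₀) * u)
            - (∑ j ∈ Finset.univ.erase i, g (f i) ^ t * (g (f j) * coeff ν (X j * u)))
            - g f₀ * (g (f i) ^ t * coeff ν u) := by
        rw [expand ν, ← Finset.add_sum_erase _ _ (Finset.mem_univ i), hXi]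
        simp only [mul_add, Finset.mul_sum]
        ring
      rw [hstep]
      have h1 : g (f i) ^ t * coeff ν (MvPolynomial.map g (forcingPoly R n f f₀) * u) ∈ g.range :=
        mul_mem (pow_mem (g.mem_range_self (f i)) t) (hu ν)
      have h2 : ∀ j ∈ Finset.univ.erase i,
          g (f i) ^ t * (g (f j) * coeff ν (X j * u)) ∈ g.range := by
        intro j hj
        have hji : j ≠ i := Finset.ne_of_mem_erase hj
        have hc : g (f i) ^ t * coeff ν (X j * u) ∈ g.range := by
          rw [coeff_X_mul']
          split_ifs with hjs
          · refine ih _ ?_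
            have hsub : ((ν - Finsupp.single j 1 : Fin n →₀ ℕ)) i = ν i := by
              rw [Finsupp.tsub_apply, Finsupp.single_apply]
              simp [hji]
            rw [hsub, hνi]; omega
          · rw [mul_zero]; exact ⟨0, map_zero g⟩
        rw [mul_left_comm]
        exact mul_mem (g.mem_range_self (f j)) hc
      have h3 : g f₀ * (g (f i) ^ t * coeff ν u) ∈ g.range :=
        mul_mem (g.mem_range_self f₀) (ih ν (by rw [hνi]; omega))
      exact sub_mem (sub_mem h1 (sum_mem h2)) h3
  exact ⟨u.degreeOf i + 1, fun μ => main _ μ (by omega)⟩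

theorem mv_prime_X {K : Type*} [CommRing K] [IsDomain K] {n : ℕ} (j : Fin n) :
    Prime (X j : MvPolynomial (Fin n) K) := by
  cases n with
  | zero => exact j.elim0
  | succ m =>
    let e := (renameEquiv K (Equiv.swap j 0)).trans (finSuccEquiv K m)
    rw [← MulEquiv.prime_iff (e.toRingEquiv.toMulEquiv)]
    have he : e (X j) = Polynomial.X := by
      simp [e, renameEquiv_apply, rename_X, Equiv.swap_apply_left, finSuccEquiv_X_zero]
    show Prime (e (X j))
    rw [he]
    exact Polynomial.prime_X

theorem prime_map_forcing {R : Type*} [CommRing R] [IsDomain R] {K : Type*} [Field K]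
    [Algebra R K] [IsFractionRing R K] {n : ℕ} (f : Fin n → R) (f₀ : R)
    {j : Fin n} (hj : f j ≠ 0) :
    Prime (MvPolynomial.map (algebraMap R K) (forcingPoly R n f f₀)) := by
  classical
  set g := algebraMap R K with hg
  set H := MvPolynomial.map g (forcingPoly R n f f₀) with hHdef
  have haj : g (f j) ≠ 0 := fun h => hj ((map_eq_zero_iff g (IsFractionRing.injective R K)).mp h)
  set a : K := g (f j) with ha
  have hHexp : H = (∑ k : Fin n, C (g (f k)) * X k) + C (g f₀) := by
    simp [hHdef, forcingPoly]
  set w : MvPolynomial (Fin n) K := H - C a * X j with hwdef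
  have hwexp : w = (∑ k ∈ Finset.univ.erase j, C (g (f k)) * X k) + C (g f₀) := by
    rw [hwdef, hHexp, ← Finset.sum_erase_add _ _ (Finset.mem_univ j)]
    ring
  have hw : ∀ s : Fin n → MvPolynomial (Fin n) K, (∀ k, k ≠ j → s k = X k) →
      aeval s w = w := by
    intro s hs
    rw [hwexp]
    simp only [map_add, map_sum, map_mul, aeval_C, aeval_X, algebraMap_eq]
    congr 1
    exact Finset.sum_congr rfl fun k hk => by rw [hs k (Finset.ne_of_mem_erase hk)]
  set s : Fin n → MvPolynomial (Fin n) K :=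
    fun k => if k = j then X j + C a⁻¹ * w else X k with hsdef
  set t : Fin n → MvPolynomial (Fin n) K :=
    fun k => if k = j then X j - C a⁻¹ * w else X k with htdef
  set F : MvPolynomial (Fin n) K →ₐ[K] MvPolynomial (Fin n) K := aeval s with hF
  set G : MvPolynomial (Fin n) K →ₐ[K] MvPolynomial (Fin n) K := aeval t with hG
  have hFw : F w = w := hw s fun k hk => if_neg hk
  have hGw : G w = w := hw t fun k hk => if_neg hk
  have comp1 : F.comp G = AlgHom.id K _ := by
    apply MvPolynomial.algHom_ext
    intro k
    simp only [AlgHom.comp_apply, AlgHom.id_apply, hG, aeval_X]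
    by_cases hk : k = j
    · subst hk
      rw [htdef]
      simp only [eq_self_iff_true, if_true]
      rw [map_sub, map_mul, hF, aeval_X, hsdef]
      simp only [eq_self_iff_true, if_true]
      rw [aeval_C, algebraMap_eq, ← hF, hFw]
      ring
    · rw [htdef]
      simp only [if_neg hk]
      rw [hF, aeval_X, hsdef]
      simp only [if_neg hk]
  have comp2 : G.comp F = AlgHom.id K _ := by
    apply MvPolynomial.algHom_ext
    intro k
    simp only [AlgHom.comp_apply, AlgHom.id_apply, hF, aeval_X]
    by_cases hk : k = j
    · subst hk
      rw [hsdef]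
      simp only [eq_self_iff_true, if_true]
      rw [map_add, map_mul, hG, aeval_X, htdef]
      simp only [eq_self_iff_true, if_true]
      rw [aeval_C, algebraMap_eq, ← hG, hGw]
      ring
    · rw [hsdef]
      simp only [if_neg hk]
      rw [hG, aeval_X, htdef]
      simp only [if_neg hk]
  set e := AlgEquiv.ofAlgHom F G comp1 comp2 with he
  have hprimeCX : Prime (C a * X j : MvPolynomial (Fin n) K) := by
    have hu : IsUnit (C a : MvPolynomial (Fin n) K) :=
      (isUnit_iff_ne_zero.mpr haj).map (C : K →+* MvPolynomial (Fin n) K)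
    have hassoc : Associated (X j : MvPolynomial (Fin n) K) (C a * X j) := by
      rw [mul_comm]
      exact (associated_mul_unit_left _ _ hu).symm
    exact hassoc.prime (mv_prime_X j)
  have heH : e (C a * X j) = H := by
    show F (C a * X j) = H
    rw [map_mul, hF, aeval_X, aeval_C, algebraMap_eq, hsdef]
    simp only [eq_self_iff_true, if_true]
    have : (C a : MvPolynomial (Fin n) K) * (X j + C a⁻¹ * w) = C a * X j + C (a * a⁻¹) * w := by
      rw [C_mul]; ring
    rw [this, mul_inv_cancel₀ haj, C_1, one_mul, hwdef]
    ring
  rw [← heH]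
  exact (MulEquiv.prime_iff (e.toRingEquiv.toMulEquiv)).mpr hprimeCX

theorem coeff_range_exists_map {R K : Type*} [CommRing R] [CommRing K] {n : ℕ}
    (g : R →+* K) (p : MvPolynomial (Fin n) K)
    (h : ∀ μ, coeff μ p ∈ g.range) : ∃ v, MvPolynomial.map g v = p := by
  classical
  refine ⟨∑ μ ∈ p.support, monomial μ ((h μ).choose), ?_⟩
  rw [map_sum]
  simp_rw [map_monomial]
  conv_rhs => rw [p.as_sum]
  exact Finset.sum_congr rfl fun μ _ => by rw [(h μ).choose_spec]

theorem pow_mul_mem_span {R : Type*} [CommRing R] [IsDomain R] {n : ℕ}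
    (f : Fin n → R) (f₀ : R) (G : MvPolynomial (Fin n) R)
    (hG : G ∈ horizontalPrime R n f f₀) (i : Fin n) :
    ∃ m : ℕ, C (f i ^ m) * G ∈ Ideal.span {forcingPoly R n f f₀} := by
  set g := algebraMap R (FractionRing R) with hg
  have hginj : Function.Injective g := IsFractionRing.injective R (FractionRing R)
  rw [horizontalPrime, Ideal.mem_comap, Ideal.mem_span_singleton] at hG
  obtain ⟨u, hu⟩ := hG
  have hcoeff : ∀ μ, coeff μ (MvPolynomial.map g (forcingPoly R n f f₀) * u) ∈ g.range := by
    intro μ; rw [← hu, coeff_map]; exact g.mem_range_self _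
  obtain ⟨m, hm⟩ := key_pow R _ n g f f₀ u hcoeff i
  have hc2 : ∀ μ, coeff μ (MvPolynomial.C (g (f i) ^ m) * u) ∈ g.range := by
    intro μ; rw [coeff_C_mul]; exact hm μ
  obtain ⟨v, hv⟩ := coeff_range_exists_map g _ hc2
  refine ⟨m, ?_⟩
  rw [Ideal.mem_span_singleton]
  refine ⟨v, ?_⟩
  apply MvPolynomial.map_injective g hginj
  rw [map_mul, map_mul, hv, MvPolynomial.map_C, map_pow, hu]
  ring

/-- For a noetherian domain `R`, a forcing equation `h = f_1T_1+⋯+f_nT_n+f₀`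
with `(f_1,…,f_n) ≠ 0` and a prime `𝔮 ⊆ R` minimal over `(f_1,…,f_n,f₀)`, the extended
ideal `𝔮B` is a minimal prime over `(h)` in `B = R[T_1,…,T_n]` iff there is `G` in the
horizontal prime `𝔭` with `G ∉ 𝔮B`, i.e. iff `𝔭 ⊄ 𝔮B`. -/
theorem extended_prime_is_vertical_component_iff
    (R : Type*) [CommRing R] [IsDomain R] [IsNoetherianRing R]
    (n : ℕ) (f : Fin n → R) (f₀ : R) (hf : ∃ i, f i ≠ 0)
    (q : Ideal R) (hq : q ∈ (Ideal.span (insert f₀ (Set.range f))).minimalPrimes) :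
    Ideal.map (C : R →+* MvPolynomial (Fin n) R) q ∈
        (Ideal.span {forcingPoly R n f f₀}).minimalPrimes ↔
      ∃ G ∈ horizontalPrime R n f f₀,
        G ∉ Ideal.map (C : R →+* MvPolynomial (Fin n) R) q := by
  classical
  have hqprime : q.IsPrime := hq.1.1
  have hqle : Ideal.span (insert f₀ (Set.range f)) ≤ q := hq.1.2
  have hf₀q : f₀ ∈ q := hqle (Ideal.subset_span (Set.mem_insert _ _))
  have hfiq : ∀ i, f i ∈ q := fun i =>
    hqle (Ideal.subset_span (Set.mem_insert_of_mem _ ⟨i, rfl⟩))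
  have hmapprime := map_C_isPrime R n q hqprime
  have hhq : forcingPoly R n f f₀ ∈ Ideal.map (C : R →+* MvPolynomial (Fin n) R) q :=
    Ideal.add_mem _
      (Ideal.sum_mem _ fun i _ =>
        Ideal.mul_mem_right _ _ (Ideal.mem_map_of_mem _ (hfiq i)))
      (Ideal.mem_map_of_mem _ hf₀q)
  have hcomap : Ideal.comap (C : R →+* MvPolynomial (Fin n) R)
      (Ideal.map (C : R →+* MvPolynomial (Fin n) R) q) = q := by
    ext a
    rw [Ideal.mem_comap, mem_map_C_iff]
    constructor
    · intro h; simpa using h 0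
    · intro ha m
      rw [coeff_C]
      split_ifs
      exacts [ha, q.zero_mem]
  constructor
  · intro hmin
    by_contra hno
    push_neg at hno
    obtain ⟨j, hj⟩ := hf
    have hpprime : (horizontalPrime R n f f₀).IsPrime := by
      have := (Ideal.span_singleton_prime (prime_map_forcing (K := FractionRing R) f f₀ hj).ne_zero).mpr
        (prime_map_forcing (K := FractionRing R) f f₀ hj)
      exact Ideal.IsPrime.comap _
    have hspanle : Ideal.span {forcingPoly R n f f₀} ≤ horizontalPrime R n f f₀ := by
      rw [Ideal.span_le, Set.singleton_subset_iff]
      exact Ideal.subset_span rfl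
    have hqlep := hmin.2 ⟨hpprime, hspanle⟩ hno
    have hCj : (C (f j) : MvPolynomial (Fin n) R) ∈ horizontalPrime R n f f₀ :=
      hqlep (Ideal.mem_map_of_mem _ (hfiq j))
    rw [horizontalPrime, Ideal.mem_comap, MvPolynomial.map_C, Ideal.mem_span_singleton] at hCj
    have hunit : IsUnit (MvPolynomial.map (algebraMap R (FractionRing R))
        (forcingPoly R n f f₀)) := by
      refine isUnit_of_dvd_unit hCj ?_
      refine (isUnit_iff_ne_zero.mpr ?_).map (C : FractionRing R →+* _)
      exact fun h => hj ((map_eq_zero_iff _ (IsFractionRing.injective R (FractionRing R))).mp h)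
    exact (prime_map_forcing (K := FractionRing R) f f₀ hj).not_unit hunit
  · rintro ⟨G, hGp, hGq⟩
    refine ⟨⟨hmapprime, by rwa [Ideal.span_le, Set.singleton_subset_iff]⟩, ?_⟩
    rintro J ⟨hJprime, hJle⟩ hJq
    have hGJ : G ∉ J := fun h => hGq (hJq h)
    have hfi : ∀ i, f i ∈ Ideal.comap (C : R →+* MvPolynomial (Fin n) R) J := by
      intro i
      obtain ⟨m, hm⟩ := pow_mul_mem_span f f₀ G hGp i
      rcases hJprime.mem_or_mem (hJle hm) with h | h
      · rw [Ideal.mem_comap]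
        rw [map_pow] at h
        exact hJprime.mem_of_pow_mem m h
      · exact absurd h hGJ
    have hf0 : f₀ ∈ Ideal.comap (C : R →+* MvPolynomial (Fin n) R) J := by
      rw [Ideal.mem_comap]
      have hh : forcingPoly R n f f₀ ∈ J := hJle (Ideal.subset_span rfl)
      have hcf : (C f₀ : MvPolynomial (Fin n) R)
          = forcingPoly R n f f₀ - ∑ i, C (f i) * X i := by
        rw [forcingPoly]; ring
      rw [hcf]
      exact Ideal.sub_mem _ hh
        (Ideal.sum_mem _ fun i _ => Ideal.mul_mem_right _ _ (hfi i))
    have hIle : Ideal.span (insert f₀ (Set.range f))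
        ≤ Ideal.comap (C : R →+* MvPolynomial (Fin n) R) J := by
      rw [Ideal.span_le]
      rintro x (rfl | ⟨i, rfl⟩)
      exacts [hf0, hfi i]
    have hleq : Ideal.comap (C : R →+* MvPolynomial (Fin n) R) J ≤ q := by
      calc Ideal.comap (C : R →+* MvPolynomial (Fin n) R) J
          ≤ Ideal.comap (C : R →+* MvPolynomial (Fin n) R)
              (Ideal.map (C : R →+* MvPolynomial (Fin n) R) q) := Ideal.comap_mono hJq
        _ = q := hcomap
    have hqle2 : q ≤ Ideal.comap (C : R →+* MvPolynomial (Fin n) R) J :=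
      hq.2 ⟨hJprime.comap _, hIle⟩ hleq
    calc Ideal.map (C : R →+* MvPolynomial (Fin n) R) q
        ≤ Ideal.map (C : R →+* MvPolynomial (Fin n) R)
            (Ideal.comap (C : R →+* MvPolynomial (Fin n) R) J) := Ideal.map_mono hqle2
      _ ≤ J := Ideal.map_comap_le
end

section
/- Let R be a factorial domain (unique factorization domain), let f_1,…,f_n, f ∈ R with some f_i ≠ 0, let d be a greatest common divisor of f_1,…,f_n and f, and write f_1T_1+⋯+f_nT_n+f = d·(f_1'T_1+⋯+f_n'T_n+f') with f_i' = f_i/d and f' = f/d. Then h' = f_1'T_1+⋯+f_n'T_n+f' is an irreducible (hence prime) element of R[T_1,…,T_n], and the principal ideal (h') equals the horizontal prime R[T_1,…,T_n] ∩ (h)Q(R)[T_1,…,T_n]. -/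
open MvPolynomial

attribute [local instance] MvPolynomial.algebraMvPolynomial

lemma forcing_coeff_X {R : Type*} [CommRing R] {n : ℕ} (f : Fin n → R) (f₀ : R) (j : Fin n) :
    coeff (Finsupp.single j 1) (forcingPoly R n f f₀) = f j := by
  classical
  rw [forcingPoly, coeff_add, MvPolynomial.coeff_sum, coeff_C,
    if_neg (fun h0 => one_ne_zero (α := ℕ) (Finsupp.single_eq_zero.mp h0.symm)), add_zero,
    Finset.sum_eq_single j]
  · simp [coeff_C_mul, coeff_X']
  · intro i _ hij
    rw [coeff_C_mul, coeff_X', if_neg, mul_zero]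
    simpa [Finsupp.single_left_inj (one_ne_zero (α := ℕ))] using hij
  · intro hj; exact absurd (Finset.mem_univ j) hj

lemma forcing_coeff_zero {R : Type*} [CommRing R] {n : ℕ} (f : Fin n → R) (f₀ : R) :
    coeff 0 (forcingPoly R n f f₀) = f₀ := by
  classical
  rw [forcingPoly, coeff_add, MvPolynomial.coeff_sum, coeff_C, if_pos rfl,
    Finset.sum_eq_zero, zero_add]
  intro i _
  rw [coeff_C_mul, coeff_X', if_neg (by simp [Finsupp.single_eq_zero]), mul_zero]

lemma map_forcingPoly {R S : Type*} [CommRing R] [CommRing S] (φ : R →+* S)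
    {n : ℕ} (f : Fin n → R) (f₀ : R) :
    MvPolynomial.map φ (forcingPoly R n f f₀) = forcingPoly S n (fun i => φ (f i)) (φ f₀) := by
  simp [forcingPoly]

/-- Lemma `factorialhorizontal`: Let `R` be a factorial domain,
`f_1,…,f_n,f₀ ∈ R` with some `f_i ≠ 0`, and `d` a greatest common divisor of the
`f_i` and `f₀`. Writing `f_i = d·f_i'` and `f₀ = d·f₀'`, the polynomial
`h' = f_1'T_1+⋯+f_n'T_n+f₀'` is irreducible in `R[T_1,…,T_n]` and the principal ideal
`(h')` is the horizontal prime `R[T_1,…,T_n] ∩ (h)·Q(R)[T_1,…,T_n]`. -/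
theorem factorial_gcd_quotient_is_horizontal_prime
    (R : Type*) [CommRing R] [IsDomain R] [UniqueFactorizationMonoid R]
    (n : ℕ) (f f' : Fin n → R) (f₀ f₀' d : R) (hf : ∃ i, f i ≠ 0)
    (hdvd : ∀ i, f i = d * f' i) (hdvd₀ : f₀ = d * f₀')
    (hgcd : ∀ e : R, (∀ i, e ∣ f i) → e ∣ f₀ → e ∣ d) :
    Irreducible (forcingPoly R n f' f₀') ∧
    Ideal.span {forcingPoly R n f' f₀'} = horizontalPrime R n f f₀ := by
  classical
  obtain ⟨i₀, hi₀⟩ := hf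
  set K := FractionRing R
  have hinj : Function.Injective (algebraMap R K) := IsFractionRing.injective R K
  have hd : d ≠ 0 := fun h => hi₀ (by rw [hdvd i₀, h, zero_mul])
  have hf'i : f' i₀ ≠ 0 := fun h => hi₀ (by rw [hdvd i₀, h, mul_zero])
  set h' := forcingPoly R n f' f₀' with hh'
  -- primitivity
  have hprim : ∀ e : R, (∀ i, e ∣ f' i) → e ∣ f₀' → IsUnit e := by
    intro e he he0
    obtain ⟨k, hk⟩ := hgcd (d * e)
      (fun i => (hdvd i) ▸ mul_dvd_mul_left d (he i))
      (hdvd₀ ▸ mul_dvd_mul_left d he0)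
    refine IsUnit.of_mul_eq_one (a := e) k (mul_left_cancel₀ hd ?_)
    rw [mul_one, ← mul_assoc, ← hk]
  -- C p never divides h' for p prime
  have hCnd : ∀ p : R, Prime p → ¬ ((C p : MvPolynomial (Fin n) R) ∣ h') := by
    rintro p hp ⟨s, hs⟩
    refine hp.not_unit (hprim p (fun i => ?_) ?_)
    · refine ⟨coeff (Finsupp.single i 1) s, ?_⟩
      rw [← forcing_coeff_X f' f₀' i, ← hh', hs, coeff_C_mul]
    · refine ⟨coeff 0 s, ?_⟩
      rw [← forcing_coeff_zero f' f₀', ← hh', hs, coeff_C_mul]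
  -- h = C d * h'
  have hfact : forcingPoly R n f f₀ = C d * h' := by
    rw [hh', forcingPoly, forcingPoly, mul_add, Finset.mul_sum]
    simp only [hdvd, hdvd₀, map_mul, mul_assoc]
  -- key divisibility lemma
  have keyA : ∀ b : R, b ≠ 0 → ∀ g q : MvPolynomial (Fin n) R, g * C b = h' * q → h' ∣ g := by
    intro b
    refine UniqueFactorizationMonoid.induction_on_prime b ?_ ?_ ?_
    · intro hb; exact absurd rfl hb
    · intro u hu _ g q hgq
      have : h' ∣ g * C u := ⟨q, hgq⟩
      exact (IsUnit.dvd_mul_right (hu.map (C : R →+* MvPolynomial (Fin n) R))).mp this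
    · intro a p ha hp ih _ g q hgq
      have hCp : Prime (C p : MvPolynomial (Fin n) R) := (prime_C_iff _).mpr hp
      have hdvdq : (C p : MvPolynomial (Fin n) R) ∣ h' * q := by
        refine ⟨g * C a, ?_⟩
        rw [← hgq, map_mul]; ring
      rcases hCp.2.2 _ _ hdvdq with hcase | hcase
      · exact absurd hcase (hCnd p hp)
      · obtain ⟨q₁, rfl⟩ := hcase
        refine ih ha g q₁ (mul_left_cancel₀ (C_eq_zero.not.mpr hp.ne_zero) ?_)
        calc (C p : MvPolynomial (Fin n) R) * (g * C a) = g * C (p * a) := by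
              rw [map_mul]; ring
          _ = h' * (C p * q₁) := hgq
          _ = C p * (h' * q₁) := by ring
  -- the two spans in K[T] agree
  have hdK : IsUnit (algebraMap R K d) :=
    isUnit_iff_ne_zero.mpr (fun h => hd (hinj (by rw [h, map_zero])))
  have hspanK : Ideal.span {MvPolynomial.map (algebraMap R K) (forcingPoly R n f f₀)}
      = Ideal.span {MvPolynomial.map (algebraMap R K) h'} := by
    rw [hfact, map_mul, map_C]
    exact Ideal.span_singleton_mul_left_unit (hdK.map (C : K →+* MvPolynomial (Fin n) K)) _
  -- the contraction equals (h')
  have hA : Ideal.span {h'} = Ideal.comap (MvPolynomial.map (algebraMap R K))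
      (Ideal.span {MvPolynomial.map (algebraMap R K) h'}) := by
    apply le_antisymm
    · rw [Ideal.span_le, Set.singleton_subset_iff]
      exact Ideal.mem_span_singleton_self _
    · intro g hg
      rw [Ideal.mem_comap, Ideal.mem_span_singleton] at hg
      obtain ⟨q, hq⟩ := hg
      obtain ⟨⟨q₀, m⟩, key⟩ := IsLocalization.surj
        ((nonZeroDivisors R).map (C : R →+* MvPolynomial (Fin n) R)) q
      obtain ⟨m, hmmem⟩ := m
      obtain ⟨b, hb, rfl⟩ := hmmem
      have hb0 : b ≠ 0 := nonZeroDivisors.ne_zero hb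
      rw [Ideal.mem_span_singleton]
      refine keyA b hb0 g q₀ ?_
      apply MvPolynomial.map_injective (algebraMap R K) hinj
      simp only [map_mul, map_C]
      calc MvPolynomial.map (algebraMap R K) g * C (algebraMap R K b)
          = MvPolynomial.map (algebraMap R K) h' * (q * C (algebraMap R K b)) := by
            rw [hq]; ring
        _ = MvPolynomial.map (algebraMap R K) h' * MvPolynomial.map (algebraMap R K) q₀ := by
            congr 1
            simpa using key
  -- primality over the fraction field
  have hcK : (algebraMap R K) (f' i₀) ≠ 0 := fun h => hf'i (hinj (by rw [h, map_zero]))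
  have hprimeK : Prime (MvPolynomial.map (algebraMap R K) h') := by
    rw [hh', map_forcingPoly]
    set c : Fin n → K := fun i => algebraMap R K (f' i) with hc
    set c₀ : K := algebraMap R K f₀' with hc₀
    set e : MvPolynomial (Fin n) K ≃ₐ[K] Polynomial (MvPolynomial {j : Fin n // j ≠ i₀} K) :=
      (renameEquiv K (Equiv.optionSubtypeNe i₀).symm).trans
        (optionEquivLeft K {j : Fin n // j ≠ i₀}) with he
    rw [← MulEquiv.prime_iff e]
    show Prime (e (forcingPoly K n c c₀))
    have heX : ∀ i : Fin n, e (X i) = if hi : i = i₀ then Polynomial.X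
        else Polynomial.C (X ⟨i, hi⟩) := by
      intro i
      by_cases hi : i = i₀
      · subst hi
        simp [he, Equiv.optionSubtypeNe_symm_self, optionEquivLeft_X_none]
      · simp [he, Equiv.optionSubtypeNe_symm_of_ne hi, optionEquivLeft_X_some, hi]
    have heC : ∀ a : K, e (C a) = Polynomial.C (C a) := by
      intro a; simp [he, optionEquivLeft_C]
    set P := e (forcingPoly K n c c₀) with hP
    have hPdef : P = (∑ i : Fin n, Polynomial.C (C (c i)) * e (X i)) + Polynomial.C (C c₀) := by
      rw [hP, forcingPoly, map_add, map_sum, heC]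
      simp only [map_mul, heC]
    have hdeg : P.degree ≤ 1 := by
      rw [hPdef]
      refine le_trans (Polynomial.degree_add_le _ _) (max_le ?_ ?_)
      · refine le_trans (Polynomial.degree_sum_le _ _) (Finset.sup_le fun i _ => ?_)
        refine le_trans (Polynomial.degree_mul_le _ _) ?_
        rw [heX i]
        by_cases hi : i = i₀
        · rw [dif_pos hi, Polynomial.degree_X]
          calc (Polynomial.C (C (c i))).degree + 1 ≤ 0 + 1 := by
                exact add_le_add Polynomial.degree_C_le le_rfl
            _ = 1 := by rw [zero_add]
        · rw [dif_neg hi]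
          calc (Polynomial.C (C (c i))).degree + (Polynomial.C (X _)).degree ≤ 0 + 0 :=
                add_le_add Polynomial.degree_C_le Polynomial.degree_C_le
            _ ≤ 1 := by norm_num
      · exact le_trans Polynomial.degree_C_le (by norm_num)
    have hcoeff1 : P.coeff 1 = C (c i₀) := by
      rw [hPdef, Polynomial.coeff_add, Polynomial.coeff_C, if_neg one_ne_zero, add_zero,
        Polynomial.finset_sum_coeff, Finset.sum_eq_single i₀]
      · rw [heX i₀, dif_pos rfl]
        simp
      · intro i _ hi
        rw [heX i, dif_neg hi, ← Polynomial.C_mul, Polynomial.coeff_C, if_neg one_ne_zero]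
      · intro hi; exact absurd (Finset.mem_univ i₀) hi
    have hu1 : IsUnit (P.coeff 1) := by
      rw [hcoeff1]
      exact (isUnit_iff_ne_zero.mpr hcK).map (C : K →+* MvPolynomial {j : Fin n // j ≠ i₀} K)
    obtain ⟨u, hu'⟩ := hu1
    have hform : P = Polynomial.C (u : MvPolynomial {j : Fin n // j ≠ i₀} K) *
        (Polynomial.X - Polynomial.C (-((↑u⁻¹ : MvPolynomial {j : Fin n // j ≠ i₀} K) *
          P.coeff 0))) := by
      rw [map_neg, sub_neg_eq_add, mul_add, ← Polynomial.C_mul, ← mul_assoc,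
        Units.mul_inv, one_mul, hu']
      exact Polynomial.eq_X_add_C_of_degree_le_one hdeg
    rw [hform]
    have hassoc : Associated
        (Polynomial.X - Polynomial.C (-((↑u⁻¹ : MvPolynomial {j : Fin n // j ≠ i₀} K) *
          P.coeff 0)))
        (Polynomial.C (u : MvPolynomial {j : Fin n // j ≠ i₀} K) *
          (Polynomial.X - Polynomial.C (-((↑u⁻¹ : MvPolynomial {j : Fin n // j ≠ i₀} K) *
            P.coeff 0)))) := by
      refine ⟨Units.map (Polynomial.C :
        MvPolynomial {j : Fin n // j ≠ i₀} K →+* _).toMonoidHom u, ?_⟩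
      simp [mul_comm]
    exact hassoc.prime (Polynomial.prime_X_sub_C _)
  -- assemble
  have hneK : MvPolynomial.map (algebraMap R K) h' ≠ 0 := hprimeK.ne_zero
  have hprimeSpanK : (Ideal.span {MvPolynomial.map (algebraMap R K) h'}).IsPrime :=
    (Ideal.span_singleton_prime hneK).mpr hprimeK
  have h2 : Ideal.span {h'} = horizontalPrime R n f f₀ := by
    rw [horizontalPrime, hspanK, ← hA]
  have hprimeSpan : (Ideal.span {h'}).IsPrime := by
    rw [hA]; exact hprimeSpanK.comap _
  have hne' : h' ≠ 0 := fun h => hneK (by rw [h, map_zero])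
  exact ⟨((Ideal.span_singleton_prime hne').mp hprimeSpan).irreducible, h2⟩
end

section
/- Let R be a factorial domain, B = R[T_1,…,T_n], h = f_1T_1+⋯+f_nT_n+f a forcing equation with at least one f_i ≠ 0, A = B/(h), and let d be a greatest common divisor of f_1,…,f_n and f. If gcd(d, f_1/d, …, f_n/d) = 1 (i.e. d and the elements f_i/d have no common prime factor), then Spec A is connected. Moreover, if R is a principal ideal domain, then conversely Spec A is connected if and only if gcd(d, f_1/d, …, f_n/d) = 1. -/
open MvPolynomial

section Aux
set_option linter.unusedSectionVars false
open PrimeSpectrum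


section
variable {R : Type*} [CommRing R] [IsDomain R] {n : ℕ} (f' : Fin n → R) (f₀' : R)

lemma forcing_coeff_zero_s14 : constantCoeff (forcingPoly R n f' f₀') = f₀' := by
  simp [forcingPoly]

lemma forcing_coeff_single (i : Fin n) :
    coeff (Finsupp.single i 1) (forcingPoly R n f' f₀') = f' i := by
  classical
  simp only [forcingPoly, coeff_add, coeff_sum, coeff_C_mul, coeff_X', coeff_C]
  rw [Finset.sum_eq_single i]
  · rw [if_pos rfl, if_neg (fun h0 => by simpa using DFunLike.congr_fun h0 i), mul_one, add_zero]
  · intro k _ hk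
    rw [if_neg, mul_zero]
    intro hEq
    exact hk (by
      have := (Finsupp.single_eq_single_iff _ _ _ _).mp hEq
      rcases this with ⟨h1, _⟩ | ⟨h1, _⟩
      · exact h1
      · exact absurd h1 one_ne_zero)
  · simp
end

private lemma aux_dvd_C_fin {R : Type*} [CommRing R] [IsDomain R] :
    ∀ (m : ℕ) {a : MvPolynomial (Fin m) R} {c : R}, c ≠ 0 → a ∣ C c → ∃ r : R, a = C r := by
  intro m
  induction m with
  | zero =>
    intro a c _ _
    exact ⟨constantCoeff a, (eq_C_of_isEmpty a)⟩
  | succ m ih =>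
    rintro a c hc ⟨b, hab⟩
    set ψ := finSuccEquiv R m with hψ
    have hψC : ∀ r : R, ψ (C r) = Polynomial.C (C r) := fun r => by
      rw [← MvPolynomial.algebraMap_eq, AlgEquiv.commutes]
      simp [Polynomial.algebraMap_apply, MvPolynomial.algebraMap_eq]
    have h1 : ψ a * ψ b = Polynomial.C (C c) := by
      rw [← map_mul, ← hab, hψC]
    have hC0 : (Polynomial.C (C c) : Polynomial (MvPolynomial (Fin m) R)) ≠ 0 := by
      simp [hc]
    have ha0 : ψ a ≠ 0 := fun h0 => hC0 (by rw [← h1, h0, zero_mul])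
    have hb0 : ψ b ≠ 0 := fun h0 => hC0 (by rw [← h1, h0, mul_zero])
    have hdeg : (ψ a).natDegree = 0 := by
      have := Polynomial.natDegree_mul ha0 hb0
      rw [h1, Polynomial.natDegree_C] at this
      omega
    have ha : ψ a = Polynomial.C ((ψ a).coeff 0) := Polynomial.eq_C_of_natDegree_eq_zero hdeg
    have hdvd : (ψ a).coeff 0 ∣ C c := by
      have : ψ a ∣ Polynomial.C (C c) := ⟨ψ b, h1.symm⟩
      rw [ha] at this
      exact (Polynomial.C_dvd_iff_dvd_coeff _ _).mp this 0 |>.trans (by simp)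
    obtain ⟨r, hr⟩ := ih hc hdvd
    refine ⟨r, ?_⟩
    have : ψ a = ψ (C r) := by rw [ha, hr, hψC]
    exact ψ.injective this

lemma aux_dvd_C {σ : Type*} [Fintype σ] {R : Type*} [CommRing R] [IsDomain R]
    {a : MvPolynomial σ R} {c : R} (hc : c ≠ 0) (h : a ∣ C c) : ∃ r : R, a = C r := by
  set ρ := renameEquiv R (Fintype.equivFin σ)
  have h' : ρ a ∣ C c := by
    have := map_dvd ρ.toAlgHom h
    simpa [ρ, renameEquiv_apply, rename_C] using this
  obtain ⟨r, hr⟩ := aux_dvd_C_fin _ hc h'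
  refine ⟨r, ρ.injective ?_⟩
  rw [hr]
  simp [ρ, renameEquiv_apply, rename_C]

lemma forcing_prime {R : Type*} [CommRing R] [IsDomain R] [UniqueFactorizationMonoid R]
    {n : ℕ} {f' : Fin n → R} {f₀' : R} (j : Fin n) (hj : f' j ≠ 0)
    (hunit : ∀ r : R, (∀ i, r ∣ f' i) → r ∣ f₀' → IsUnit r) :
    Prime (forcingPoly R n f' f₀') := by
  classical
  set σ' := {k : Fin n // k ≠ j} with hσ'
  set e : Fin n ≃ Option σ' := (Equiv.optionSubtypeNe j).symm with he
  set φ : MvPolynomial (Fin n) R ≃ₐ[R] Polynomial (MvPolynomial σ' R) :=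
    (renameEquiv R e).trans (optionEquivLeft R σ') with hφ
  set h' : MvPolynomial (Fin n) R := forcingPoly R n f' f₀' with hh'
  set q : Polynomial (MvPolynomial σ' R) := φ h' with hqdef
  have hφC : ∀ r : R, φ (C r) = Polynomial.C (C r) := fun r => by
    simp [hφ, renameEquiv_apply, rename_C, optionEquivLeft_C]
  have hφXj : φ (X j) = Polynomial.X := by
    simp [hφ, renameEquiv_apply, rename_X, he, Equiv.optionSubtypeNe_symm_self,
      optionEquivLeft_X_none]
    rw [Equiv.optionSubtypeNe_symm_self]
    rw [optionEquivLeft_X_none]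
  have hφXk : ∀ (k : Fin n) (hk : k ≠ j), φ (X k) = Polynomial.C (X ⟨k, hk⟩) := by
    intro k hk
    simp [hφ, renameEquiv_apply, rename_X, he, Equiv.optionSubtypeNe_symm_of_ne hk,
      optionEquivLeft_X_some]
  have hq : q = (∑ i : Fin n, Polynomial.C (C (f' i)) * φ (X i)) + Polynomial.C (C f₀') := by
    rw [hqdef, hh']
    simp only [forcingPoly, map_add, map_sum, map_mul, hφC]
  have hdeg : q.degree ≤ 1 := by
    rw [hq]
    refine le_trans (Polynomial.degree_add_le _ _) (max_le ?_ ?_)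
    · refine le_trans (Polynomial.degree_sum_le _ _) (Finset.sup_le fun i _ => ?_)
      refine le_trans (Polynomial.degree_mul_le _ _) ?_
      by_cases hi : i = j
      · subst hi
        rw [hφXj]
        calc Polynomial.degree (Polynomial.C (C (f' i))) + (Polynomial.X).degree
            ≤ 0 + 1 := add_le_add Polynomial.degree_C_le Polynomial.degree_X_le
          _ = 1 := by rw [zero_add]
      · rw [hφXk i hi]
        calc _ ≤ (0 : WithBot ℕ) + 0 := add_le_add Polynomial.degree_C_le Polynomial.degree_C_le
          _ ≤ 1 := by norm_num
    · exact le_trans Polynomial.degree_C_le (by norm_num)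
  have hcoeff1 : q.coeff 1 = C (f' j) := by
    rw [hq, Polynomial.coeff_add, Polynomial.finset_sum_coeff]
    rw [Finset.sum_eq_single j]
    · rw [hφXj]
      simp [Polynomial.coeff_C_mul, Polynomial.coeff_C]
    · intro k _ hk
      rw [hφXk k hk, ← Polynomial.C_mul]
      simp [Polynomial.coeff_C]
    · simp
  have hCfj : (C (f' j) : MvPolynomial σ' R) ≠ 0 := by
    simpa using hj
  have hq0 : q ≠ 0 := fun h0 => hCfj (by rw [← hcoeff1, h0, Polynomial.coeff_zero])
  have hqform : q = Polynomial.C (C (f' j)) * Polynomial.X + Polynomial.C (q.coeff 0) := by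
    rw [← hcoeff1]
    exact Polynomial.eq_X_add_C_of_degree_le_one hdeg
  have hdeg1 : q.degree = 1 := by
    rw [hqform]
    exact Polynomial.degree_linear hCfj
  -- primitivity
  have hprim : ∀ s : MvPolynomial σ' R, Polynomial.C s ∣ q → IsUnit s := by
    intro s hs
    have hs1 : s ∣ C (f' j) := by
      rw [← hcoeff1]
      exact (Polynomial.C_dvd_iff_dvd_coeff _ _).mp hs 1
    obtain ⟨r, rfl⟩ := aux_dvd_C hj hs1
    have hrh' : C r ∣ h' := by
      obtain ⟨t, ht⟩ := hs
      refine ⟨φ.symm t, φ.injective ?_⟩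
      rw [map_mul, hφC, AlgEquiv.apply_symm_apply, ← hqdef, ht]
    have hrc : ∀ m, r ∣ coeff m h' := (C_dvd_iff_dvd_coeff _ _).mp hrh'
    have hr1 : ∀ i, r ∣ f' i := fun i => by
      have := hrc (Finsupp.single i 1)
      rwa [hh', forcing_coeff_single] at this
    have hr0 : r ∣ f₀' := by
      have := hrc 0
      rw [hh'] at this
      rwa [show coeff 0 (forcingPoly R n f' f₀') = f₀' from forcing_coeff_zero_s14 f' f₀'] at this
    exact (hunit r hr1 hr0).map C
  -- irreducibility
  have hirr : Irreducible q := by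
    constructor
    · exact Polynomial.not_isUnit_of_degree_pos q (by rw [hdeg1]; norm_num)
    · intro a b hab
      have ha0 : a ≠ 0 := fun h0 => hq0 (by rw [hab, h0, zero_mul])
      have hb0 : b ≠ 0 := fun h0 => hq0 (by rw [hab, h0, mul_zero])
      have hnd : a.natDegree + b.natDegree = 1 := by
        have h2 := Polynomial.natDegree_mul ha0 hb0
        rw [← hab] at h2
        have hq1 : q.natDegree = 1 := Polynomial.natDegree_eq_of_degree_eq_some hdeg1
        rw [hq1] at h2
        omega
      rcases Nat.eq_zero_or_pos a.natDegree with ha | ha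
      · left
        have := Polynomial.eq_C_of_natDegree_eq_zero ha
        have hdvd : Polynomial.C (a.coeff 0) ∣ q := ⟨b, by rw [← this, hab]⟩
        rw [this]
        exact (hprim _ hdvd).map Polynomial.C
      · right
        have hb : b.natDegree = 0 := by omega
        have := Polynomial.eq_C_of_natDegree_eq_zero hb
        have hdvd : Polynomial.C (b.coeff 0) ∣ q := ⟨a, by rw [← this, hab, mul_comm]⟩
        rw [this]
        exact (hprim _ hdvd).map Polynomial.C
  have hqprime : Prime q := (UniqueFactorizationMonoid.irreducible_iff_prime).mp hirr
  exact (MulEquiv.prime_iff φ.toMulEquiv).mp hqprime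


lemma connectedSpace_quotient_iff {B : Type*} [CommRing B] (g : B) :
    ConnectedSpace (PrimeSpectrum (B ⧸ Ideal.span {g})) ↔
      IsConnected (zeroLocus ({g} : Set B)) := by
  have hsurj : Function.Surjective (Ideal.Quotient.mk (Ideal.span {g})) :=
    Ideal.Quotient.mk_surjective
  have hrange : Set.range (comap (Ideal.Quotient.mk (Ideal.span {g}))) =
      zeroLocus ({g} : Set B) := by
    rw [range_comap_of_surjective _ _ hsurj, Ideal.mk_ker, PrimeSpectrum.zeroLocus_span]
  constructor
  · intro h
    rw [← hrange]
    exact isConnected_range (continuous_comap (Ideal.Quotient.mk (Ideal.span {g})))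
  · intro h
    have hcs : ConnectedSpace (zeroLocus ({g} : Set B)) := Subtype.connectedSpace h
    have hcs2 : ConnectedSpace (Set.range (comap (Ideal.Quotient.mk (Ideal.span {g})))) := by
      rw [hrange]; exact hcs
    have homeo := Topology.IsEmbedding.toHomeomorph
      (isClosedEmbedding_comap_of_surjective _ _ hsurj).toIsEmbedding
    exact homeo.symm.surjective.connectedSpace homeo.symm.continuous


section Main
variable {R : Type*} [CommRing R] [IsDomain R] [UniqueFactorizationMonoid R]
    {n : ℕ} {f f' : Fin n → R} {f₀ f₀' d : R}


theorem main_forward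
    (hf : ∃ i, f i ≠ 0)
    (hdvd : ∀ i, f i = d * f' i) (hdvd₀ : f₀ = d * f₀')
    (hgcd : ∀ e : R, (∀ i, e ∣ f i) → e ∣ f₀ → e ∣ d)
    (hone : ∀ e : R, e ∣ d → (∀ i, e ∣ f' i) → IsUnit e) :
    IsConnected (zeroLocus ({forcingPoly R n f f₀} : Set (MvPolynomial (Fin n) R))) := by
  classical
  obtain ⟨j, hfj⟩ := hf
  have hd0 : d ≠ 0 := fun h0 => hfj (by rw [hdvd j, h0, zero_mul])
  have hf'j : f' j ≠ 0 := fun h0 => hfj (by rw [hdvd j, h0, mul_zero])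
  have hunit : ∀ r : R, (∀ i, r ∣ f' i) → r ∣ f₀' → IsUnit r := by
    intro r h1 h0
    obtain ⟨t, ht⟩ := hgcd (d * r)
      (fun i => by rw [hdvd i]; exact mul_dvd_mul_left d (h1 i))
      (by rw [hdvd₀]; exact mul_dvd_mul_left d h0)
    refine IsUnit.of_mul_eq_one (a := r) t (mul_left_cancel₀ hd0 ?_)
    rw [← mul_assoc, ← ht, mul_one]
  set h' : MvPolynomial (Fin n) R := forcingPoly R n f' f₀' with hh'
  have hp' : Prime h' := forcing_prime j hf'j hunit
  have hfactor : forcingPoly R n f f₀ = C d * h' := by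
    simp only [hh', forcingPoly, hdvd, hdvd₀, map_mul, mul_add, Finset.mul_sum, mul_assoc]
  have hsp : (Ideal.span {h'}).IsPrime := (Ideal.span_singleton_prime hp'.ne_zero).mpr hp'
  set x₀ : PrimeSpectrum (MvPolynomial (Fin n) R) := ⟨Ideal.span {h'}, hsp⟩ with hx₀def
  have hx₀ : x₀ ∈ zeroLocus ({h'} : Set (MvPolynomial (Fin n) R)) := by
    rw [mem_zeroLocus, Set.singleton_subset_iff]
    exact Ideal.mem_span_singleton_self h'
  have hirrh' : IsIrreducible (zeroLocus ({h'} : Set (MvPolynomial (Fin n) R))) := by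
    rw [← PrimeSpectrum.zeroLocus_span, isIrreducible_zeroLocus_iff, Ideal.IsPrime.radical hsp]
    exact hsp
  set c : Set (Set (PrimeSpectrum (MvPolynomial (Fin n) R))) :=
    insert (zeroLocus {h'})
      ((fun p => zeroLocus {h'} ∪ zeroLocus {C p}) ''
        {p | p ∈ UniqueFactorizationMonoid.factors d}) with hc
  -- every member of c is preconnected and contains x₀
  have hmem : ∀ s ∈ c, x₀ ∈ s := by
    rintro s (rfl | ⟨p, hp, rfl⟩)
    · exact hx₀
    · exact Or.inl hx₀
  have hpre : ∀ s ∈ c, IsPreconnected s := by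
    rintro s (rfl | ⟨p, hp, rfl⟩)
    · exact hirrh'.2.isPreconnected
    · have hpp : Prime p := UniqueFactorizationMonoid.prime_of_factor p hp
      have hpd : p ∣ d := UniqueFactorizationMonoid.dvd_of_mem_factors hp
      have hCp : Prime (C p : MvPolynomial (Fin n) R) := (prime_C_iff (Fin n)).mpr hpp
      have hspC : (Ideal.span {(C p : MvPolynomial (Fin n) R)}).IsPrime :=
        (Ideal.span_singleton_prime hCp.ne_zero).mpr hCp
      have hirrC : IsIrreducible (zeroLocus ({C p} : Set (MvPolynomial (Fin n) R))) := by
        rw [← PrimeSpectrum.zeroLocus_span, isIrreducible_zeroLocus_iff,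
          Ideal.IsPrime.radical hspC]
        exact hspC
      -- the two pieces intersect
      obtain ⟨i₀, hi₀⟩ : ∃ i, ¬ p ∣ f' i := by
        by_contra hall
        push_neg at hall
        exact hpp.not_unit (hone p hpd hall)
      have hnetop : Ideal.span ({C p, h'} : Set (MvPolynomial (Fin n) R)) ≠ ⊤ := by
        intro htop
        set P : Ideal R := Ideal.span {p} with hP
        haveI hPp : P.IsPrime := (Ideal.span_singleton_prime hpp.ne_zero).mpr hpp
        set χ : MvPolynomial (Fin n) R →+* Polynomial (R ⧸ P) :=
          eval₂Hom ((Polynomial.C : (R ⧸ P) →+* Polynomial (R ⧸ P)).comp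
            (Ideal.Quotient.mk P)) (fun k => if k = i₀ then Polynomial.X else 0) with hχ
        have hχh' : χ h' = Polynomial.C (Ideal.Quotient.mk P (f' i₀)) * Polynomial.X +
            Polynomial.C (Ideal.Quotient.mk P f₀') := by
          rw [hh']
          simp only [forcingPoly, map_add, map_sum, map_mul, hχ, eval₂Hom_C, eval₂Hom_X',
            RingHom.coe_comp, Function.comp_apply]
          congr 1
          rw [Finset.sum_eq_single i₀]
          · rw [if_pos rfl]
          · intro k _ hk
            rw [if_neg hk, mul_zero]
          · intro hmem'
            exact absurd (Finset.mem_univ i₀) hmem'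
        have hχCp : χ (C p) = 0 := by
          simp only [hχ, eval₂Hom_C, RingHom.coe_comp, Function.comp_apply]
          rw [Ideal.Quotient.eq_zero_iff_mem.mpr (Ideal.mem_span_singleton_self p)]
          exact map_zero _
        obtain ⟨u, v, huv⟩ := Ideal.mem_span_pair.mp
          ((Ideal.eq_top_iff_one _).mp htop)
        have h1 : χ v * χ h' = 1 := by
          have := congrArg χ huv
          rw [map_add, map_mul, map_mul, hχCp, mul_zero, zero_add, map_one] at this
          exact this
        have hu : IsUnit (χ h') := IsUnit.of_mul_eq_one _ (by rw [mul_comm] at h1; exact h1)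
        have hdeg0 : (χ h').natDegree = 0 := Polynomial.natDegree_eq_zero_of_isUnit hu
        have hco : (χ h').coeff 1 = Ideal.Quotient.mk P (f' i₀) := by
          rw [hχh']
          simp [Polynomial.coeff_C]
        have : Ideal.Quotient.mk P (f' i₀) = 0 := by
          rw [← hco]
          exact Polynomial.coeff_eq_zero_of_natDegree_lt (by omega)
        exact hi₀ (Ideal.mem_span_singleton.mp (Ideal.Quotient.eq_zero_iff_mem.mp this))
      obtain ⟨M, hM, hMle⟩ := Ideal.exists_le_maximal _ hnetop
      set y : PrimeSpectrum (MvPolynomial (Fin n) R) := ⟨M, hM.isPrime⟩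
      have hy1 : y ∈ zeroLocus ({h'} : Set (MvPolynomial (Fin n) R)) := by
        rw [mem_zeroLocus, Set.singleton_subset_iff]
        exact hMle (Ideal.subset_span (by simp))
      have hy2 : y ∈ zeroLocus ({C p} : Set (MvPolynomial (Fin n) R)) := by
        rw [mem_zeroLocus, Set.singleton_subset_iff]
        exact hMle (Ideal.subset_span (by simp))
      exact IsPreconnected.union y hy1 hy2 hirrh'.2.isPreconnected hirrC.2.isPreconnected
  have hcov : ⋃₀ c = zeroLocus ({forcingPoly R n f f₀} : Set (MvPolynomial (Fin n) R)) := by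
    apply Set.Subset.antisymm
    · rintro x ⟨s, (rfl | ⟨p, hp, rfl⟩), hx⟩
      · rw [mem_zeroLocus, Set.singleton_subset_iff] at hx ⊢
        rw [hfactor]
        exact Ideal.mul_mem_left _ _ hx
      · rcases hx with hx | hx
        · rw [mem_zeroLocus, Set.singleton_subset_iff] at hx ⊢
          rw [hfactor]
          exact Ideal.mul_mem_left _ _ hx
        · rw [mem_zeroLocus, Set.singleton_subset_iff] at hx ⊢
          rw [hfactor]
          obtain ⟨t, ht⟩ := UniqueFactorizationMonoid.dvd_of_mem_factors hp
          rw [ht, map_mul, mul_assoc]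
          exact Ideal.mul_mem_right _ _ hx
    · intro x hx
      rw [mem_zeroLocus, Set.singleton_subset_iff, hfactor] at hx
      rcases x.2.mem_or_mem hx with hx1 | hx2
      · -- C d ∈ x; find a prime factor
        obtain ⟨u, hu⟩ := UniqueFactorizationMonoid.factors_prod hd0
        have hCu : IsUnit (C (u : R) : MvPolynomial (Fin n) R) := (Units.isUnit u).map C
        obtain ⟨w, hw⟩ := hCu.exists_right_inv
        have hCprodmem : (C ((UniqueFactorizationMonoid.factors d).prod) :
            MvPolynomial (Fin n) R) ∈ x.asIdeal := by
          have heq : (C ((UniqueFactorizationMonoid.factors d).prod) :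
              MvPolynomial (Fin n) R) = C d * w := by
            calc (C ((UniqueFactorizationMonoid.factors d).prod) :
                MvPolynomial (Fin n) R)
                = C ((UniqueFactorizationMonoid.factors d).prod) * (C (u : R) * w) := by
                  rw [hw, mul_one]
              _ = C ((UniqueFactorizationMonoid.factors d).prod * (u : R)) * w := by
                  rw [map_mul, mul_assoc]
              _ = C d * w := by rw [hu]
          rw [heq]
          exact Ideal.mul_mem_right _ _ hx1
        have hprodmem : ((UniqueFactorizationMonoid.factors d).map
            (⇑(C : R →+* MvPolynomial (Fin n) R))).prod ∈ x.asIdeal := by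
          rwa [← map_multiset_prod]
        obtain ⟨b, hb, hbmem⟩ :=
          (x.2.multiset_prod_mem_iff_exists_mem _).mp hprodmem
        obtain ⟨p, hp, rfl⟩ := Multiset.mem_map.mp hb
        refine ⟨zeroLocus {h'} ∪ zeroLocus {C p}, Or.inr ⟨p, hp, rfl⟩, Or.inr ?_⟩
        rw [mem_zeroLocus, Set.singleton_subset_iff]
        exact hbmem
      · exact ⟨zeroLocus {h'}, Or.inl rfl, by
          rw [mem_zeroLocus, Set.singleton_subset_iff]; exact hx2⟩
  rw [← hcov]
  constructor
  · exact ⟨x₀, zeroLocus {h'}, Or.inl rfl, hx₀⟩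
  · exact isPreconnected_sUnion x₀ c hmem hpre

theorem main_backward (hpid : IsPrincipalIdealRing R)
    (hf : ∃ i, f i ≠ 0)
    (hdvd : ∀ i, f i = d * f' i) (hdvd₀ : f₀ = d * f₀')
    (hgcd : ∀ e : R, (∀ i, e ∣ f i) → e ∣ f₀ → e ∣ d)
    (hcon : IsConnected (zeroLocus ({forcingPoly R n f f₀} : Set (MvPolynomial (Fin n) R)))) :
    ∀ e : R, e ∣ d → (∀ i, e ∣ f' i) → IsUnit e := by
  classical
  obtain ⟨j, hfj⟩ := hf
  have hd0 : d ≠ 0 := fun h0 => hfj (by rw [hdvd j, h0, zero_mul])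
  have hf'j : f' j ≠ 0 := fun h0 => hfj (by rw [hdvd j, h0, mul_zero])
  have hunit : ∀ r : R, (∀ i, r ∣ f' i) → r ∣ f₀' → IsUnit r := by
    intro r h1 h0
    obtain ⟨t, ht⟩ := hgcd (d * r)
      (fun i => by rw [hdvd i]; exact mul_dvd_mul_left d (h1 i))
      (by rw [hdvd₀]; exact mul_dvd_mul_left d h0)
    refine IsUnit.of_mul_eq_one (a := r) t (mul_left_cancel₀ hd0 ?_)
    rw [← mul_assoc, ← ht, mul_one]
  set h' : MvPolynomial (Fin n) R := forcingPoly R n f' f₀' with hh'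
  have hp' : Prime h' := forcing_prime j hf'j hunit
  have hfactor : forcingPoly R n f f₀ = C d * h' := by
    simp only [hh', forcingPoly, hdvd, hdvd₀, map_mul, mul_add, Finset.mul_sum, mul_assoc]
  intro e hed hef'
  by_contra hue
  have he0 : e ≠ 0 := fun h0 => hd0 (zero_dvd_iff.mp (h0 ▸ hed))
  obtain ⟨p, hpirr, hpe⟩ := WfDvdMonoid.exists_irreducible_factor hue he0
  have hpd : p ∣ d := hpe.trans hed
  have hpf' : ∀ i, p ∣ f' i := fun i => hpe.trans (hef' i)
  have hpp : Prime p := UniqueFactorizationMonoid.irreducible_iff_prime.mp hpirr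
  have hpf₀ : ¬ p ∣ f₀' := fun hp0 => hpirr.not_isUnit (hunit p hpf' hp0)
  obtain ⟨k, m, hm, hdm⟩ := WfDvdMonoid.max_power_factor hd0 hpirr
  have hmd : m ∣ d := ⟨p ^ k, by rw [hdm, mul_comm]⟩
  -- Bezout in a PID
  have cop : ∀ y : R, ¬ p ∣ y → ∃ u v : R, u * p + v * y = 1 := by
    intro y hy
    have hmax : (Ideal.span {p}).IsMaximal := PrincipalIdealRing.isMaximal_of_irreducible hpirr
    have htop : Ideal.span ({p, y} : Set R) = ⊤ := by
      by_contra hne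
      have hle : Ideal.span ({p} : Set R) ≤ Ideal.span ({p, y} : Set R) :=
        Ideal.span_mono (by simp)
      have heq := hmax.eq_of_le hne hle
      have : y ∈ Ideal.span ({p} : Set R) := by
        rw [heq]
        exact Ideal.subset_span (by simp)
      exact hy (Ideal.mem_span_singleton.mp this)
    obtain ⟨u, v, huv⟩ := Ideal.mem_span_pair.mp ((Ideal.eq_top_iff_one _).mp htop)
    exact ⟨u, v, huv⟩
  have bez : ∀ y : R, ¬ p ∣ y → ∀ x : PrimeSpectrum (MvPolynomial (Fin n) R),
      (C p : MvPolynomial (Fin n) R) ∈ x.asIdeal → (C y : MvPolynomial (Fin n) R) ∈ x.asIdeal →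
      False := by
    intro y hy x hxp hxy
    obtain ⟨u, v, huv⟩ := cop y hy
    have : (1 : MvPolynomial (Fin n) R) ∈ x.asIdeal := by
      have := congrArg (C : R →+* MvPolynomial (Fin n) R) huv
      rw [map_add, map_mul, map_mul, map_one] at this
      rw [← this]
      exact Ideal.add_mem _ (Ideal.mul_mem_left _ _ hxp) (Ideal.mul_mem_left _ _ hxy)
    exact x.2.ne_top ((Ideal.eq_top_iff_one _).mpr this)
  set A₁ := zeroLocus ({C p} : Set (MvPolynomial (Fin n) R)) with hA₁
  set A₂ := PrimeSpectrum.zeroLocus ({C m * h'} : Set (MvPolynomial (Fin n) R)) with hA₂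
  have hZ2 : zeroLocus ({forcingPoly R n f f₀} : Set (MvPolynomial (Fin n) R)) = A₁ ∪ A₂ := by
    ext x
    simp only [hA₁, hA₂, Set.mem_union, mem_zeroLocus, Set.singleton_subset_iff, hfactor]
    constructor
    · intro hx
      rcases x.2.mem_or_mem hx with hx1 | hx2
      · rw [hdm, map_mul, map_pow] at hx1
        rcases x.2.mem_or_mem hx1 with hx3 | hx4
        · exact Or.inl (x.2.mem_of_pow_mem _ hx3)
        · exact Or.inr (Ideal.mul_mem_right _ _ hx4)
      · exact Or.inr (Ideal.mul_mem_left _ _ hx2)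
    · rintro (h1 | h2)
      · obtain ⟨t, ht⟩ := hpd
        rw [ht, map_mul]
        exact Ideal.mul_mem_right _ _ (Ideal.mul_mem_right _ _ h1)
      · rcases x.2.mem_or_mem h2 with hx1 | hx2
        · obtain ⟨t, ht⟩ := hmd
          rw [ht, map_mul]
          exact Ideal.mul_mem_right _ _ (Ideal.mul_mem_right _ _ hx1)
        · exact Ideal.mul_mem_left _ _ hx2
  have hdisj : ∀ x, x ∈ A₁ → x ∈ A₂ → False := by
    intro x hx1 hx2
    rw [hA₁, mem_zeroLocus, Set.singleton_subset_iff] at hx1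
    rw [hA₂, mem_zeroLocus, Set.singleton_subset_iff] at hx2
    rcases x.2.mem_or_mem hx2 with hxm | hxh
    · exact bez m hm x hx1 hxm
    · -- h' ∈ x and C p ∈ x imply C f₀' ∈ x
      have hsum : (∑ i : Fin n, C (f' i) * X i : MvPolynomial (Fin n) R) ∈ x.asIdeal := by
        refine Ideal.sum_mem _ fun i _ => ?_
        obtain ⟨t, ht⟩ := hpf' i
        rw [ht, map_mul, mul_assoc]
        exact Ideal.mul_mem_right _ _ hx1
      have hf₀mem : (C f₀' : MvPolynomial (Fin n) R) ∈ x.asIdeal := by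
        have : (C f₀' : MvPolynomial (Fin n) R) =
            h' - ∑ i : Fin n, C (f' i) * X i := by
          rw [hh']; simp [forcingPoly]
        rw [this]
        exact Ideal.sub_mem _ hxh hsum
      exact bez f₀' hpf₀ x hx1 hf₀mem
  -- nonempty pieces
  have hCp : Prime (C p : MvPolynomial (Fin n) R) := (prime_C_iff (Fin n)).mpr hpp
  have hspC : (Ideal.span {(C p : MvPolynomial (Fin n) R)}).IsPrime :=
    (Ideal.span_singleton_prime hCp.ne_zero).mpr hCp
  have hsp : (Ideal.span {h'}).IsPrime := (Ideal.span_singleton_prime hp'.ne_zero).mpr hp'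
  set x₁ : PrimeSpectrum (MvPolynomial (Fin n) R) := ⟨Ideal.span {C p}, hspC⟩
  set x₂ : PrimeSpectrum (MvPolynomial (Fin n) R) := ⟨Ideal.span {h'}, hsp⟩
  have hx₁ : x₁ ∈ A₁ := by
    rw [hA₁, mem_zeroLocus, Set.singleton_subset_iff]
    exact Ideal.mem_span_singleton_self _
  have hx₂ : x₂ ∈ A₂ := by
    rw [hA₂, mem_zeroLocus, Set.singleton_subset_iff]
    exact Ideal.mem_span_singleton.mpr (dvd_mul_left _ _)
  -- contradiction with connectedness
  set Z := zeroLocus ({forcingPoly R n f f₀} : Set (MvPolynomial (Fin n) R)) with hZ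
  have hopen1 : IsOpen A₂ᶜ := (isClosed_zeroLocus _).isOpen_compl
  have hopen2 : IsOpen A₁ᶜ := (isClosed_zeroLocus _).isOpen_compl
  have hsub : Z ⊆ A₂ᶜ ∪ A₁ᶜ := by
    intro x hx
    rw [hZ2] at hx
    rcases hx with hx | hx
    · exact Or.inl fun hx2 => hdisj x hx hx2
    · exact Or.inr fun hx1 => hdisj x hx1 hx
  have hne1 : (Z ∩ A₂ᶜ).Nonempty := ⟨x₁, by
    rw [hZ2]; exact Or.inl hx₁, fun hx2 => hdisj x₁ hx₁ hx2⟩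
  have hne2 : (Z ∩ A₁ᶜ).Nonempty := ⟨x₂, by
    rw [hZ2]; exact Or.inr hx₂, fun hx1 => hdisj x₂ hx1 hx₂⟩
  obtain ⟨x, hxZ, hxu, hxv⟩ := hcon.isPreconnected _ _ hopen1 hopen2 hsub hne1 hne2
  rw [hZ2] at hxZ
  rcases hxZ with hx | hx
  · exact hxv hx
  · exact hxu hx
end Main

end Aux

/-- Corollary `PID`: Let `R` be a factorial domain,
`h = f_1T_1+⋯+f_nT_n+f₀` with some `f_i ≠ 0`, `A = R[T_1,…,T_n]/(h)`, and `d` a gcd of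
the `f_i` and `f₀`, with `f_i = d·f_i'`, `f₀ = d·f₀'`. If `gcd(d, f_1',…,f_n') = 1`
(i.e. `d` and the `f_i'` have no common prime factor, i.e. every common divisor is a
unit), then `Spec A` is connected. Moreover, if `R` is a principal ideal domain, then
`Spec A` is connected iff `gcd(d, f_1',…,f_n') = 1`. -/
theorem forcing_algebra_connected_of_gcd_one_and_PID_converse
    (R : Type*) [CommRing R] [IsDomain R] [UniqueFactorizationMonoid R]
    (n : ℕ) (f f' : Fin n → R) (f₀ f₀' d : R) (hf : ∃ i, f i ≠ 0)
    (hdvd : ∀ i, f i = d * f' i) (hdvd₀ : f₀ = d * f₀')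
    (hgcd : ∀ e : R, (∀ i, e ∣ f i) → e ∣ f₀ → e ∣ d) :
    ((∀ e : R, e ∣ d → (∀ i, e ∣ f' i) → IsUnit e) →
      ConnectedSpace
        (PrimeSpectrum (MvPolynomial (Fin n) R ⧸ Ideal.span {forcingPoly R n f f₀}))) ∧
    (IsPrincipalIdealRing R →
      (ConnectedSpace
          (PrimeSpectrum (MvPolynomial (Fin n) R ⧸ Ideal.span {forcingPoly R n f f₀})) ↔
        ∀ e : R, e ∣ d → (∀ i, e ∣ f' i) → IsUnit e)) := by
  constructor
  · intro hone
    exact (connectedSpace_quotient_iff _).mpr (main_forward hf hdvd hdvd₀ hgcd hone)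
  · intro hpid
    constructor
    · intro hc
      exact main_backward hpid hf hdvd hdvd₀ hgcd ((connectedSpace_quotient_iff _).mp hc)
    · intro hone
      exact (connectedSpace_quotient_iff _).mpr (main_forward hf hdvd hdvd₀ hgcd hone)
end
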